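/- arXiv:1512.05732 — 10 statements merged into one kernel-verified Lean document; each statement's English description precedes it below -/
import Mathlib

section
/- Fix g_rs, g_ds, g_dr > 0 and P_s, P_r > 0. For every power allocation (α_s, β_s, k_s, β_r) with α_s + β_s < P_s, the allocation (α_s, β_s', k_s, β_r) with β_s' = P_s − α_s is still a power allocation and satisfies min(J1', J2') > min(J1, J2), where J1', J2' are the rates of the new allocation. Consequently any rate-maximizing power allocation must use full source power, α_s + β_s = P_s. -/
/-- `J1 = log₂(1 + g_rs² β_s)`: the rate constraint from decoding at the relay. -/
noncomputable def J1 (g_rs βs : ℝ) : ℝ := Real.logb 2 (1 + g_rs ^ 2 * βs)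

/-- `J2`: the rate constraint from decoding at the destination. -/
noncomputable def J2 (g_ds g_dr αs βs ks βr : ℝ) : ℝ :=
  Real.logb 2 (1 + g_ds ^ 2 * (αs + βs) + g_dr ^ 2 * (ks * αs + βr)
    + 2 * g_ds * g_dr * Real.sqrt ks * αs)

/-- A power allocation `(α_s, β_s, k_s, β_r)`: nonnegative reals satisfying the
source power constraint `α_s + β_s ≤ P_s` and relay power constraint `k_s α_s + β_r ≤ P_r`. -/
def IsAlloc (Ps Pr αs βs ks βr : ℝ) : Prop :=
  0 ≤ αs ∧ 0 ≤ βs ∧ 0 ≤ ks ∧ 0 ≤ βr ∧ αs + βs ≤ Ps ∧ ks * αs + βr ≤ Pr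

/-! Both rate constraints are strictly increasing in `β_s`, so spending unused source power
on `β_s` strictly raises their minimum, which a maximizer cannot allow. -/

open Set

theorem J1_strictMonoOn {g_rs : ℝ} (hg : g_rs ≠ 0) : StrictMonoOn (J1 g_rs) (Ici 0) := by
  intro βs hβs βs' _ hlt
  have hg2 : 0 < g_rs ^ 2 := by positivity
  exact Real.logb_lt_logb one_lt_two (by have := mem_Ici.mp hβs; positivity) (by gcongr)

/-- Completing the square in the coherent terms shows the argument of `J2` is positive whatever
the signs of the gains. -/
theorem J2_eq_logb_coherent {g_ds g_dr αs βs ks βr : ℝ} (hk : 0 ≤ ks) :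
    J2 g_ds g_dr αs βs ks βr = Real.logb 2
      (1 + (g_ds + g_dr * Real.sqrt ks) ^ 2 * αs + g_ds ^ 2 * βs + g_dr ^ 2 * βr) := by
  rw [J2]
  congr 1
  linear_combination -g_dr ^ 2 * αs * Real.sq_sqrt hk

theorem J2_strictMonoOn {g_ds g_dr αs ks βr : ℝ} (hg : g_ds ≠ 0) (hα : 0 ≤ αs) (hk : 0 ≤ ks)
    (hβr : 0 ≤ βr) : StrictMonoOn (fun βs ↦ J2 g_ds g_dr αs βs ks βr) (Ici 0) := by
  intro βs hβs βs' _ hlt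
  have hg2 : 0 < g_ds ^ 2 := by positivity
  simp only [J2_eq_logb_coherent hk]
  exact Real.logb_lt_logb one_lt_two (by have := mem_Ici.mp hβs; positivity) (by gcongr)

theorem IsAlloc.with_full_source {Ps Pr αs βs ks βr : ℝ} (h : IsAlloc Ps Pr αs βs ks βr)
    (hlt : αs + βs < Ps) : IsAlloc Ps Pr αs (Ps - αs) ks βr := by
  obtain ⟨hα, _, hk, hβr, _, hrelay⟩ := h
  exact ⟨hα, by linarith, hk, hβr, by linarith, hrelay⟩

theorem IsAlloc.rate_lt_of_lt {g_rs g_ds g_dr Ps Pr αs βs ks βr βs' : ℝ}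
    (hgrs : g_rs ≠ 0) (hgds : g_ds ≠ 0) (h : IsAlloc Ps Pr αs βs ks βr) (hlt : βs < βs') :
    min (J1 g_rs βs) (J2 g_ds g_dr αs βs ks βr) < min (J1 g_rs βs') (J2 g_ds g_dr αs βs' ks βr) := by
  obtain ⟨hα, hβs, hk, hβr, -, -⟩ := h
  have hβs' : βs' ∈ Ici 0 := mem_Ici.mpr (hβs.trans hlt.le)
  exact min_lt_min (J1_strictMonoOn hgrs hβs hβs' hlt)
    (J2_strictMonoOn hgds hα hk hβr hβs hβs' hlt)

theorem source_uses_full_power_general (g_rs g_ds g_dr Ps Pr : ℝ)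
    (hgrs : 0 < g_rs) (hgds : 0 < g_ds) :
    (∀ αs βs ks βr : ℝ, IsAlloc Ps Pr αs βs ks βr → αs + βs < Ps →
      IsAlloc Ps Pr αs (Ps - αs) ks βr ∧
      min (J1 g_rs (Ps - αs)) (J2 g_ds g_dr αs (Ps - αs) ks βr) >
        min (J1 g_rs βs) (J2 g_ds g_dr αs βs ks βr)) ∧
    (∀ αs βs ks βr : ℝ, IsAlloc Ps Pr αs βs ks βr →
      (∀ αs' βs' ks' βr' : ℝ, IsAlloc Ps Pr αs' βs' ks' βr' →
        min (J1 g_rs βs') (J2 g_ds g_dr αs' βs' ks' βr') ≤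
          min (J1 g_rs βs) (J2 g_ds g_dr αs βs ks βr)) →
      αs + βs = Ps) := by
  refine ⟨fun αs βs ks βr h hlt ↦ ⟨h.with_full_source hlt,
    h.rate_lt_of_lt hgrs.ne' hgds.ne' (by linarith)⟩, fun αs βs ks βr h hmax ↦ ?_⟩
  by_contra hne
  have hlt : αs + βs < Ps := lt_of_le_of_ne h.2.2.2.2.1 hne
  exact (hmax αs (Ps - αs) ks βr (h.with_full_source hlt)).not_gt
    (h.rate_lt_of_lt hgrs.ne' hgds.ne' (by linarith))

/-- any allocation not using full source power is strictly improved by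
increasing `β_s` to `P_s - α_s`; consequently a rate-maximizing allocation uses full
source power. -/
theorem source_uses_full_power (g_rs g_ds g_dr Ps Pr : ℝ)
    (hgrs : 0 < g_rs) (hgds : 0 < g_ds) (hgdr : 0 < g_dr)
    (hPs : 0 < Ps) (hPr : 0 < Pr) :
    (∀ αs βs ks βr : ℝ, IsAlloc Ps Pr αs βs ks βr → αs + βs < Ps →
      IsAlloc Ps Pr αs (Ps - αs) ks βr ∧
      min (J1 g_rs (Ps - αs)) (J2 g_ds g_dr αs (Ps - αs) ks βr) >
        min (J1 g_rs βs) (J2 g_ds g_dr αs βs ks βr)) ∧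
    (∀ αs βs ks βr : ℝ, IsAlloc Ps Pr αs βs ks βr →
      (∀ αs' βs' ks' βr' : ℝ, IsAlloc Ps Pr αs' βs' ks' βr' →
        min (J1 g_rs βs') (J2 g_ds g_dr αs' βs' ks' βr') ≤
          min (J1 g_rs βs) (J2 g_ds g_dr αs βs ks βr)) →
      αs + βs = Ps) :=
  source_uses_full_power_general g_rs g_ds g_dr Ps Pr hgrs hgds
end

section
/- Fix g_rs, g_ds, g_dr > 0 and P_s, P_r > 0. Let (α_s, β_s, k_s, β_r) be a power allocation with α_s > 0 and k_s·α_s + β_r < P_r. Then the allocation (α_s, β_s, k_s', β_r) with k_s' = (P_r − β_r)/α_s is a power allocation using full relay power (k_s'·α_s + β_r = P_r), its rate J1 is unchanged, its rate J2 is strictly larger than before, and hence its composite decode-forward rate min(J1, J2) is at least that of the original allocation. Consequently, if the source performs block Markov coding (α_s > 0), the maximal composite decode-forward rate is attained with the relay using full power. -/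
variable {g_ds g_dr Ps Pr αs βs ks ks' βr : ℝ}

theorem J2_lt_J2_of_lt (hgds : 0 ≤ g_ds) (hgdr : 0 < g_dr) (hαs : 0 < αs) (hβs : 0 ≤ βs)
    (hks : 0 ≤ ks) (hβr : 0 ≤ βr) (hlt : ks < ks') :
    J2 g_ds g_dr αs βs ks βr < J2 g_ds g_dr αs βs ks' βr := by
  have hpower : g_dr ^ 2 * (ks * αs + βr) < g_dr ^ 2 * (ks' * αs + βr) := by
    gcongr
  have hcoherent : 2 * g_ds * g_dr * √ks * αs ≤ 2 * g_ds * g_dr * √ks' * αs := by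
    gcongr
  unfold J2
  apply Real.logb_lt_logb one_lt_two (by positivity)
  linarith

theorem IsAlloc.fullRelay (h : IsAlloc Ps Pr αs βs ks βr) (hαs : 0 < αs) :
    IsAlloc Ps Pr αs βs ((Pr - βr) / αs) βr ∧ ((Pr - βr) / αs) * αs + βr = Pr := by
  obtain ⟨hα, hβs, hks, hβr, hsource, hrelay⟩ := h
  have hle : ks ≤ (Pr - βr) / αs := (le_div_iff₀ hαs).2 (by linarith)
  have hfull : ((Pr - βr) / αs) * αs + βr = Pr := by
    rw [div_mul_cancel₀ _ hαs.ne', sub_add_cancel]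
  exact ⟨⟨hα, hβs, hks.trans hle, hβr, hsource, hfull.le⟩, hfull⟩

theorem IsAlloc.J2_lt_J2_fullRelay (h : IsAlloc Ps Pr αs βs ks βr) (hgds : 0 ≤ g_ds)
    (hgdr : 0 < g_dr) (hαs : 0 < αs) (hlt : ks * αs + βr < Pr) :
    J2 g_ds g_dr αs βs ks βr < J2 g_ds g_dr αs βs ((Pr - βr) / αs) βr := by
  obtain ⟨-, hβs, hks, hβr, -, -⟩ := h
  exact J2_lt_J2_of_lt hgds hgdr hαs hβs hks hβr ((lt_div_iff₀ hαs).2 (by linarith))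

theorem relay_uses_full_power_general (g_rs g_ds g_dr Ps Pr : ℝ)
    (hgds : 0 < g_ds) (hgdr : 0 < g_dr) :
    (∀ αs βs ks βr : ℝ, IsAlloc Ps Pr αs βs ks βr → 0 < αs → ks * αs + βr < Pr →
      IsAlloc Ps Pr αs βs ((Pr - βr) / αs) βr ∧
      ((Pr - βr) / αs) * αs + βr = Pr ∧
      J1 g_rs βs = J1 g_rs βs ∧
      J2 g_ds g_dr αs βs ((Pr - βr) / αs) βr > J2 g_ds g_dr αs βs ks βr ∧
      min (J1 g_rs βs) (J2 g_ds g_dr αs βs ((Pr - βr) / αs) βr) ≥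
        min (J1 g_rs βs) (J2 g_ds g_dr αs βs ks βr)) ∧
    (∀ αs βs ks βr : ℝ, IsAlloc Ps Pr αs βs ks βr → 0 < αs →
      ∃ ks' βr' : ℝ, IsAlloc Ps Pr αs βs ks' βr' ∧ ks' * αs + βr' = Pr ∧
        min (J1 g_rs βs) (J2 g_ds g_dr αs βs ks βr) ≤
          min (J1 g_rs βs) (J2 g_ds g_dr αs βs ks' βr')) := by
  refine ⟨fun αs βs ks βr hA hαs hlt => ?_, fun αs βs ks βr hA hαs => ?_⟩
  · obtain ⟨hA', hfull⟩ := hA.fullRelay hαs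
    have hJ2 := hA.J2_lt_J2_fullRelay hgds.le hgdr hαs hlt
    exact ⟨hA', hfull, rfl, hJ2, min_le_min_left _ hJ2.le⟩
  rcases hA.2.2.2.2.2.lt_or_eq with hlt | hfull
  · obtain ⟨hA', hfull⟩ := hA.fullRelay hαs
    have hJ2 := hA.J2_lt_J2_fullRelay hgds.le hgdr hαs hlt
    exact ⟨_, βr, hA', hfull, min_le_min_left _ hJ2.le⟩
  · exact ⟨ks, βr, hA, hfull, le_rfl⟩

/-- if the source performs block Markov coding (`α_s > 0`) and the relay
does not use full power, scaling up `k_s` to `(P_r - β_r)/α_s` yields a valid allocation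
with full relay power, the same `J1`, a strictly larger `J2`, and hence a rate at least
as large; consequently, with `α_s > 0` the maximal rate is attained at full relay power. -/
theorem relay_uses_full_power (g_rs g_ds g_dr Ps Pr : ℝ)
    (hgrs : 0 < g_rs) (hgds : 0 < g_ds) (hgdr : 0 < g_dr)
    (hPs : 0 < Ps) (hPr : 0 < Pr) :
    (∀ αs βs ks βr : ℝ, IsAlloc Ps Pr αs βs ks βr → 0 < αs → ks * αs + βr < Pr →
      IsAlloc Ps Pr αs βs ((Pr - βr) / αs) βr ∧
      ((Pr - βr) / αs) * αs + βr = Pr ∧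
      J1 g_rs βs = J1 g_rs βs ∧
      J2 g_ds g_dr αs βs ((Pr - βr) / αs) βr > J2 g_ds g_dr αs βs ks βr ∧
      min (J1 g_rs βs) (J2 g_ds g_dr αs βs ((Pr - βr) / αs) βr) ≥
        min (J1 g_rs βs) (J2 g_ds g_dr αs βs ks βr)) ∧
    (∀ αs βs ks βr : ℝ, IsAlloc Ps Pr αs βs ks βr → 0 < αs →
      ∃ ks' βr' : ℝ, IsAlloc Ps Pr αs βs ks' βr' ∧ ks' * αs + βr' = Pr ∧
        min (J1 g_rs βs) (J2 g_ds g_dr αs βs ks βr) ≤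
          min (J1 g_rs βs) (J2 g_ds g_dr αs βs ks' βr')) :=
  relay_uses_full_power_general g_rs g_ds g_dr Ps Pr hgds hgdr
end

section
/- Fix g_rs, g_ds, g_dr > 0 and P_s, P_r > 0, and suppose the link state lies in regime R0, i.e. g_rs² ≤ g_ds². Then every power allocation (α_s, β_s, k_s, β_r) satisfies min(J1, J2) ≤ log₂(1 + g_rs²·P_s) ≤ log₂(1 + g_ds²·P_s); in other words, the direct-transmission rate log₂(1 + g_ds²·P_s) is at least the composite decode-forward rate of every power allocation, so direct transmission is optimal in regime R0. -/
theorem logb_one_add_le_logb_one_add {b x y : ℝ} (hb : 1 < b) (hx : 0 ≤ x) (hxy : x ≤ y) :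
    Real.logb b (1 + x) ≤ Real.logb b (1 + y) :=
  Real.logb_le_logb_of_le hb (by linarith) (by linarith)

theorem logb_one_add_sq_mul_le_of_sq_le {b g h P : ℝ} (hb : 1 < b) (hP : 0 ≤ P)
    (hgh : g ^ 2 ≤ h ^ 2) : Real.logb b (1 + g ^ 2 * P) ≤ Real.logb b (1 + h ^ 2 * P) :=
  logb_one_add_le_logb_one_add hb (by positivity) (mul_le_mul_of_nonneg_right hgh hP)

theorem J1_le_of_le {g_rs βs Ps : ℝ} (hβs : 0 ≤ βs) (hβsPs : βs ≤ Ps) :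
    J1 g_rs βs ≤ Real.logb 2 (1 + g_rs ^ 2 * Ps) :=
  logb_one_add_le_logb_one_add one_lt_two (by positivity)
    (mul_le_mul_of_nonneg_left hβsPs (sq_nonneg g_rs))

theorem regime_R0_direct_transmission_optimal_general (g_rs g_ds g_dr Ps Pr : ℝ)
    (hPs : 0 < Ps)
    (hR0 : g_rs ^ 2 ≤ g_ds ^ 2) :
    ∀ αs βs ks βr : ℝ, IsAlloc Ps Pr αs βs ks βr →
      min (J1 g_rs βs) (J2 g_ds g_dr αs βs ks βr) ≤ Real.logb 2 (1 + g_rs ^ 2 * Ps) ∧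
      Real.logb 2 (1 + g_rs ^ 2 * Ps) ≤ Real.logb 2 (1 + g_ds ^ 2 * Ps) := by
  rintro αs βs ks βr ⟨hαs, hβs, -, -, hsum, -⟩
  have hβsPs : βs ≤ Ps := by linarith
  exact ⟨(min_le_left _ _).trans (J1_le_of_le hβs hβsPs),
    logb_one_add_sq_mul_le_of_sq_le one_lt_two hPs.le hR0⟩

/-- in link-state regime R0 (`g_rs² ≤ g_ds²`), the composite
decode-forward rate of every power allocation is at most `log₂(1 + g_rs² P_s)`,
which in turn is at most the direct-transmission rate `log₂(1 + g_ds² P_s)`;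
direct transmission is optimal. -/
theorem regime_R0_direct_transmission_optimal (g_rs g_ds g_dr Ps Pr : ℝ)
    (hgrs : 0 < g_rs) (hgds : 0 < g_ds) (hgdr : 0 < g_dr)
    (hPs : 0 < Ps) (hPr : 0 < Pr)
    (hR0 : g_rs ^ 2 ≤ g_ds ^ 2) :
    ∀ αs βs ks βr : ℝ, IsAlloc Ps Pr αs βs ks βr →
      min (J1 g_rs βs) (J2 g_ds g_dr αs βs ks βr) ≤ Real.logb 2 (1 + g_rs ^ 2 * Ps) ∧
      Real.logb 2 (1 + g_rs ^ 2 * Ps) ≤ Real.logb 2 (1 + g_ds ^ 2 * Ps) :=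
  regime_R0_direct_transmission_optimal_general g_rs g_ds g_dr Ps Pr hPs hR0
end

section
/- Fix g_rs, g_ds, g_dr > 0 and P_s, P_r > 0, and suppose the link state lies in regime R1, i.e. g_ds² < g_rs² ≤ g_ds² + (P_r/P_s)·g_dr². Set β_r* = (g_rs² − g_ds²)·P_s/g_dr². Then: (i) 0 < β_r* ≤ P_r, so the independent-coding allocation (α_s, β_s, k_s, β_r) = (0, P_s, 0, β_r*) is a valid power allocation, and β_r* < P_r whenever g_rs² < g_ds² + (P_r/P_s)·g_dr² (relay power savings); (ii) at this allocation J1 = J2 = log₂(1 + g_rs²·P_s); and (iii) every power allocation satisfies min(J1, J2) ≤ log₂(1 + g_rs²·P_s), so the independent-coding allocation maximizes the composite decode-forward rate in regime R1. -/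
/-!
The relay must decode the whole source message, so the rate never exceeds the relay-link
bound `J1` at full source power `P_s`, whatever the allocation. With independent coding
(`α_s = k_s = 0`) the destination sees the SNR `g_ds² P_s + g_dr² β_r`, and `β_r*` is exactly
the relay power that raises it to `g_rs² P_s`; regime R1 says this power is positive and
within the relay budget.
-/

lemma mul_div_le_iff_le_div_mul {a c P Q : ℝ} (hP : 0 < P) (hc : 0 < c) :
    a * P / c ≤ Q ↔ a ≤ Q / P * c := by
  rw [div_le_iff₀ hc, ← le_div_iff₀ hP, div_mul_eq_mul_div]

lemma mul_div_lt_iff_lt_div_mul {a c P Q : ℝ} (hP : 0 < P) (hc : 0 < c) :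
    a * P / c < Q ↔ a < Q / P * c := by
  rw [div_lt_iff₀ hc, ← lt_div_iff₀ hP, div_mul_eq_mul_div]

lemma isAlloc_independent {Ps Pr βs βr : ℝ} (hβs : 0 ≤ βs) (hβr : 0 ≤ βr)
    (hβsPs : βs ≤ Ps) (hβrPr : βr ≤ Pr) : IsAlloc Ps Pr 0 βs 0 βr :=
  ⟨le_rfl, hβs, le_rfl, hβr, by rwa [zero_add], by rwa [zero_mul, zero_add]⟩

lemma J1_le_J1 (g : ℝ) {βs Ps : ℝ} (hβs : 0 ≤ βs) (hβsPs : βs ≤ Ps) :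
    J1 g βs ≤ J1 g Ps :=
  Real.logb_le_logb_of_le one_lt_two (by positivity) (by gcongr)

lemma J1_le_of_isAlloc (g : ℝ) {Ps Pr αs βs ks βr : ℝ} (h : IsAlloc Ps Pr αs βs ks βr) :
    J1 g βs ≤ J1 g Ps := by
  obtain ⟨hαs, hβs, -, -, hsum, -⟩ := h
  exact J1_le_J1 g hβs (by linarith)

lemma J2_independent (g_ds g_dr βs βr : ℝ) :
    J2 g_ds g_dr 0 βs 0 βr = Real.logb 2 (1 + g_ds ^ 2 * βs + g_dr ^ 2 * βr) := by
  simp [J2]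

theorem regime_R1_independent_coding_optimal_general (g_rs g_ds g_dr Ps Pr : ℝ)
    (hgdr : 0 < g_dr)
    (hPs : 0 < Ps)
    (hR1l : g_ds ^ 2 < g_rs ^ 2) (hR1r : g_rs ^ 2 ≤ g_ds ^ 2 + (Pr / Ps) * g_dr ^ 2)
    (βrStar : ℝ) (hβrStar : βrStar = (g_rs ^ 2 - g_ds ^ 2) * Ps / g_dr ^ 2) :
    (0 < βrStar ∧ βrStar ≤ Pr) ∧
    IsAlloc Ps Pr 0 Ps 0 βrStar ∧
    (g_rs ^ 2 < g_ds ^ 2 + (Pr / Ps) * g_dr ^ 2 → βrStar < Pr) ∧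
    J1 g_rs Ps = Real.logb 2 (1 + g_rs ^ 2 * Ps) ∧
    J2 g_ds g_dr 0 Ps 0 βrStar = Real.logb 2 (1 + g_rs ^ 2 * Ps) ∧
    (∀ αs βs ks βr : ℝ, IsAlloc Ps Pr αs βs ks βr →
      min (J1 g_rs βs) (J2 g_ds g_dr αs βs ks βr) ≤ Real.logb 2 (1 + g_rs ^ 2 * Ps)) := by
  subst hβrStar
  have hdr : 0 < g_dr ^ 2 := by positivity
  have hgap : 0 < g_rs ^ 2 - g_ds ^ 2 := sub_pos.2 hR1l
  have hpos : 0 < (g_rs ^ 2 - g_ds ^ 2) * Ps / g_dr ^ 2 := by positivity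
  have hle : (g_rs ^ 2 - g_ds ^ 2) * Ps / g_dr ^ 2 ≤ Pr :=
    (mul_div_le_iff_le_div_mul hPs hdr).2 (sub_le_iff_le_add'.2 hR1r)
  refine ⟨⟨hpos, hle⟩, isAlloc_independent hPs.le hpos.le le_rfl hle,
    fun hR1r' => (mul_div_lt_iff_lt_div_mul hPs hdr).2 (sub_lt_iff_lt_add'.2 hR1r'), rfl, ?_,
    fun αs βs ks βr h => (min_le_left _ _).trans (J1_le_of_isAlloc g_rs h)⟩
  rw [J2_independent]
  congr 1
  field_simp
  ring

/-- in link-state regime R1 (`g_ds² < g_rs² ≤ g_ds² + (P_r/P_s) g_dr²`),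
the independent-coding allocation `(0, P_s, 0, β_r*)` with
`β_r* = (g_rs² - g_ds²) P_s / g_dr²` is valid, saves relay power whenever the regime
condition is strict, achieves `J1 = J2 = log₂(1 + g_rs² P_s)`, and no power allocation
achieves a larger composite decode-forward rate. -/
theorem regime_R1_independent_coding_optimal (g_rs g_ds g_dr Ps Pr : ℝ)
    (hgrs : 0 < g_rs) (hgds : 0 < g_ds) (hgdr : 0 < g_dr)
    (hPs : 0 < Ps) (hPr : 0 < Pr)
    (hR1l : g_ds ^ 2 < g_rs ^ 2) (hR1r : g_rs ^ 2 ≤ g_ds ^ 2 + (Pr / Ps) * g_dr ^ 2)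
    (βrStar : ℝ) (hβrStar : βrStar = (g_rs ^ 2 - g_ds ^ 2) * Ps / g_dr ^ 2) :
    (0 < βrStar ∧ βrStar ≤ Pr) ∧
    IsAlloc Ps Pr 0 Ps 0 βrStar ∧
    (g_rs ^ 2 < g_ds ^ 2 + (Pr / Ps) * g_dr ^ 2 → βrStar < Pr) ∧
    J1 g_rs Ps = Real.logb 2 (1 + g_rs ^ 2 * Ps) ∧
    J2 g_ds g_dr 0 Ps 0 βrStar = Real.logb 2 (1 + g_rs ^ 2 * Ps) ∧
    (∀ αs βs ks βr : ℝ, IsAlloc Ps Pr αs βs ks βr →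
      min (J1 g_rs βs) (J2 g_ds g_dr αs βs ks βr) ≤ Real.logb 2 (1 + g_rs ^ 2 * Ps)) :=
  regime_R1_independent_coding_optimal_general g_rs g_ds g_dr Ps Pr hgdr hPs hR1l hR1r βrStar
    hβrStar
end

section
/- Fix g_rs, g_ds, g_dr > 0 and P_s, P_r > 0, and suppose the link state lies in regime R2, i.e. g_rs²·P_s > g_ds²·P_s + g_dr²·P_r. Along the block-Markov curve of allocations α ↦ (α_s, β_s, k_s, β_r) = (α, P_s − α, P_r/α, 0) for α ∈ (0, P_s], the function J1(α) = log₂(1 + g_rs²·(P_s − α)) is strictly decreasing and J2(α) = log₂(1 + g_ds²·P_s + g_dr²·P_r + 2·g_ds·g_dr·√(P_r·α)) is strictly increasing; the discriminant g_ds²·g_dr²·P_r − g_rs²·(g_dr²·P_r + g_ds²·P_s − g_rs²·P_s) is strictly positive; and there is a unique α = ξ ∈ (0, P_s) with J1(ξ) = J2(ξ), given in closed form by ξ = [(−g_ds·g_dr·√P_r + √(g_ds²·g_dr²·P_r − g_rs²·(g_dr²·P_r + g_ds²·P_s − g_rs²·P_s)))/g_rs²]². -/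
open Real Set

section Quadratic

variable {a b c : ℝ}

lemma strictMonoOn_quadratic (ha : 0 < a) (hb : 0 ≤ b) :
    StrictMonoOn (fun s => a * s ^ 2 + 2 * b * s) (Ici 0) := by
  intro x hx y _ hxy
  have hx : 0 ≤ x := hx
  exact add_lt_add_of_lt_of_le (by gcongr) (by gcongr)

lemma quadratic_root_pos (ha : 0 < a) (hc : 0 < c) : 0 < (-b + √(b ^ 2 + a * c)) / a := by
  have hb : |b| < √(b ^ 2 + a * c) := by
    rw [← sqrt_sq_eq_abs]
    exact sqrt_lt_sqrt (sq_nonneg b) (by nlinarith)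
  exact div_pos (by linarith [le_abs_self b]) ha

lemma quadratic_root_eq (ha : a ≠ 0) (hd : 0 ≤ b ^ 2 + a * c) :
    a * ((-b + √(b ^ 2 + a * c)) / a) ^ 2 + 2 * b * ((-b + √(b ^ 2 + a * c)) / a) = c := by
  set s := √(b ^ 2 + a * c)
  calc a * ((-b + s) / a) ^ 2 + 2 * b * ((-b + s) / a) = (s ^ 2 - b ^ 2) / a := by
        field_simp; ring
    _ = c := by rw [sq_sqrt hd]; field_simp; ring

end Quadratic

section Channel

variable {g_rs g_ds g_dr Ps Pr : ℝ}

lemma strictAntiOn_logb_relay (hgrs : 0 < g_rs) :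
    StrictAntiOn (fun α => logb 2 (1 + g_rs ^ 2 * (Ps - α))) (Iic Ps) := by
  intro x _ y hy hxy
  have hy : 0 ≤ Ps - y := sub_nonneg.2 hy
  refine logb_lt_logb one_lt_two (by positivity) ?_
  gcongr

lemma strictMonoOn_logb_destination (hgds : 0 < g_ds) (hgdr : 0 < g_dr) (hPs : 0 ≤ Ps)
    (hPr : 0 < Pr) :
    StrictMonoOn (fun α => logb 2 (1 + g_ds ^ 2 * Ps + g_dr ^ 2 * Pr
      + 2 * g_ds * g_dr * √(Pr * α))) (Ici 0) := by
  intro x hx y _ hxy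
  have hx : 0 ≤ x := hx
  refine logb_lt_logb one_lt_two (by positivity) ?_
  gcongr

lemma discriminant_eq_sq_add (hPr : 0 ≤ Pr) :
    g_ds ^ 2 * g_dr ^ 2 * Pr - g_rs ^ 2 * (g_dr ^ 2 * Pr + g_ds ^ 2 * Ps - g_rs ^ 2 * Ps)
      = (g_ds * g_dr * √Pr) ^ 2 + g_rs ^ 2 * (g_rs ^ 2 * Ps - (g_ds ^ 2 * Ps + g_dr ^ 2 * Pr)) := by
  linear_combination (-(g_ds ^ 2 * g_dr ^ 2)) * sq_sqrt hPr

lemma logb_crossing_iff (hgds : 0 < g_ds) (hgdr : 0 < g_dr) (hPs : 0 ≤ Ps) (hPr : 0 ≤ Pr)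
    {α : ℝ} (hα : 0 ≤ α) (hαPs : α ≤ Ps) :
    logb 2 (1 + g_rs ^ 2 * (Ps - α))
        = logb 2 (1 + g_ds ^ 2 * Ps + g_dr ^ 2 * Pr + 2 * g_ds * g_dr * √(Pr * α))
      ↔ g_rs ^ 2 * √α ^ 2 + 2 * (g_ds * g_dr * √Pr) * √α
        = g_rs ^ 2 * Ps - (g_ds ^ 2 * Ps + g_dr ^ 2 * Pr) := by
  have hJ1pos : 0 < 1 + g_rs ^ 2 * (Ps - α) := by
    have := sub_nonneg.2 hαPs
    positivity
  have hJ2pos : 0 < 1 + g_ds ^ 2 * Ps + g_dr ^ 2 * Pr + 2 * g_ds * g_dr * √(Pr * α) := by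
    positivity
  rw [(logb_injOn_pos one_lt_two).eq_iff hJ1pos hJ2pos, sqrt_mul hPr, sq_sqrt hα]
  constructor <;> intro h <;> linarith

end Channel

/-- in regime R2 (`g_rs² P_s > g_ds² P_s + g_dr² P_r`), along the
block-Markov curve `α ↦ (α, P_s - α, P_r/α, 0)` on `(0, P_s]`, `J1(α)` is strictly
decreasing and `J2(α)` is strictly increasing, the discriminant is strictly positive,
and the two curves cross at the unique point `α = ξ` of `(0, P_s)`, with `ξ` in closed
form. -/
theorem regime_R2_unique_crossing (g_rs g_ds g_dr Ps Pr : ℝ)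
    (hgrs : 0 < g_rs) (hgds : 0 < g_ds) (hgdr : 0 < g_dr)
    (hPs : 0 < Ps) (hPr : 0 < Pr)
    (hR2 : g_rs ^ 2 * Ps > g_ds ^ 2 * Ps + g_dr ^ 2 * Pr)
    (J1c J2c : ℝ → ℝ)
    (hJ1c : ∀ α, J1c α = Real.logb 2 (1 + g_rs ^ 2 * (Ps - α)))
    (hJ2c : ∀ α, J2c α = Real.logb 2 (1 + g_ds ^ 2 * Ps + g_dr ^ 2 * Pr
      + 2 * g_ds * g_dr * Real.sqrt (Pr * α)))
    (ξ : ℝ)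
    (hξ : ξ = ((-(g_ds * g_dr * Real.sqrt Pr)
      + Real.sqrt (g_ds ^ 2 * g_dr ^ 2 * Pr
        - g_rs ^ 2 * (g_dr ^ 2 * Pr + g_ds ^ 2 * Ps - g_rs ^ 2 * Ps))) / g_rs ^ 2) ^ 2) :
    StrictAntiOn J1c (Set.Ioc 0 Ps) ∧
    StrictMonoOn J2c (Set.Ioc 0 Ps) ∧
    0 < g_ds ^ 2 * g_dr ^ 2 * Pr - g_rs ^ 2 * (g_dr ^ 2 * Pr + g_ds ^ 2 * Ps - g_rs ^ 2 * Ps) ∧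
    (ξ ∈ Set.Ioo 0 Ps ∧ J1c ξ = J2c ξ) ∧
    (∀ α ∈ Set.Ioo (0 : ℝ) Ps, J1c α = J2c α → α = ξ) := by
  obtain rfl : J1c = _ := funext hJ1c
  obtain rfl : J2c = _ := funext hJ2c
  rw [discriminant_eq_sq_add hPr.le] at hξ ⊢
  set b := g_ds * g_dr * √Pr
  set c := g_rs ^ 2 * Ps - (g_ds ^ 2 * Ps + g_dr ^ 2 * Pr)
  set t := (-b + √(b ^ 2 + g_rs ^ 2 * c)) / g_rs ^ 2
  have hb : 0 < b := by positivity
  have hc : 0 < c := by linarith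
  have ht : 0 < t := quadratic_root_pos (by positivity) hc
  have hteq : g_rs ^ 2 * t ^ 2 + 2 * b * t = c := quadratic_root_eq (by positivity) (by positivity)
  have hξt : √ξ = t := by rw [hξ, sqrt_sq ht.le]
  have hξPs : ξ < Ps := by
    have hcPs : c < g_rs ^ 2 * Ps := by
      linarith [show 0 < g_ds ^ 2 * Ps + g_dr ^ 2 * Pr by positivity]
    have : g_rs ^ 2 * ξ < g_rs ^ 2 * Ps := by rw [hξ]; linarith [mul_pos hb ht]
    exact lt_of_mul_lt_mul_left this (sq_nonneg g_rs)
  have hξpos : 0 < ξ := hξ ▸ pow_pos ht 2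
  refine ⟨(strictAntiOn_logb_relay hgrs).mono Ioc_subset_Iic_self,
    (strictMonoOn_logb_destination hgds hgdr hPs.le hPr).mono
      (Ioc_subset_Ioi_self.trans Ioi_subset_Ici_self),
    by positivity, ⟨⟨hξpos, hξPs⟩, ?_⟩, ?_⟩
  · rw [logb_crossing_iff hgds hgdr hPs.le hPr.le hξpos.le hξPs.le, hξt]
    exact hteq
  · intro α ⟨hα, hαPs⟩ hcross
    rw [logb_crossing_iff hgds hgdr hPs.le hPr.le hα.le hαPs.le] at hcross
    have hsqrt : √α = t := (strictMonoOn_quadratic (by positivity) hb.le).injOn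
      (sqrt_nonneg α) ht.le (hcross.trans hteq.symm)
    rw [hξ, ← hsqrt, sq_sqrt hα.le]
end

section
/- Fix g_rs, g_ds, g_dr > 0 and P_s, P_r > 0, and suppose the link state lies in regime R2, i.e. g_rs²·P_s > g_ds²·P_s + g_dr²·P_r. Let ξ = [(−g_ds·g_dr·√P_r + √(g_ds²·g_dr²·P_r − g_rs²·(g_dr²·P_r + g_ds²·P_s − g_rs²·P_s)))/g_rs²]². Then every power allocation (α_s, β_s, k_s, β_r) satisfies min(J1, J2) ≤ log₂(1 + g_rs²·(P_s − ξ)), and this value is attained by the block Markov allocation (α_s, β_s, k_s, β_r) = (ξ, P_s − ξ, P_r/ξ, 0); thus coherent block Markov coding with full relay power and no independent-coding component is rate-optimal in regime R2. -/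
open Real

theorem quadratic_eq_zero_of_mul_eq_neg_add_sqrt {a b c x : ℝ} (ha : a ≠ 0)
    (hd : 0 ≤ b ^ 2 - a * c) (hx : a * x = -b + √(b ^ 2 - a * c)) :
    a * x ^ 2 + 2 * b * x + c = 0 := by
  have hsq : (a * x + b) ^ 2 = b ^ 2 - a * c := by
    rw [hx, neg_add_cancel_comm, sq_sqrt hd]
  have : a * (a * x ^ 2 + 2 * b * x + c) = 0 := by linear_combination hsq
  exact (mul_eq_zero.mp this).resolve_left ha

theorem neg_add_sqrt_div_pos {a b c : ℝ} (ha : 0 < a) (hc : c < 0) :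
    0 < (-b + √(b ^ 2 - a * c)) / a := by
  have hb : |b| < √(b ^ 2 - a * c) := by
    rw [← sqrt_sq_eq_abs]
    exact sqrt_lt_sqrt (sq_nonneg b) (by nlinarith)
  exact div_pos (by linarith [le_abs_self b]) ha

theorem sqrt_mul_le_sqrt_mul_of_mul_le {k α P x : ℝ} (hk : 0 ≤ k) (hα : 0 ≤ α) (hx : 0 ≤ x)
    (hkα : k * α ≤ P) (hαx : α ≤ x ^ 2) : √k * α ≤ √P * x :=
  calc √k * α = √(k * α) * √α := by rw [sqrt_mul hk, mul_assoc, mul_self_sqrt hα]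
    _ ≤ √P * x := by
      gcongr
      calc √α ≤ √(x ^ 2) := sqrt_le_sqrt hαx
        _ = x := sqrt_sq hx

theorem J1_le_logb {g_rs βs B : ℝ} (hβs : 0 ≤ βs) (hB : βs ≤ B) :
    J1 g_rs βs ≤ logb 2 (1 + g_rs ^ 2 * B) :=
  logb_le_logb_of_le one_lt_two (by have := mul_nonneg (sq_nonneg g_rs) hβs; linarith)
    (by gcongr)

section BlockMarkov

variable {g_rs g_ds g_dr Ps Pr : ℝ}

/-- `√ξ`, where `ξ` is the block Markov source power. -/
noncomputable def blockMarkovAmplitude (g_rs g_ds g_dr Ps Pr : ℝ) : ℝ :=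
  (-(g_ds * g_dr * √Pr) + √(g_ds ^ 2 * g_dr ^ 2 * Pr
    - g_rs ^ 2 * (g_dr ^ 2 * Pr + g_ds ^ 2 * Ps - g_rs ^ 2 * Ps))) / g_rs ^ 2

theorem blockMarkovAmplitude_eq (hPr : 0 ≤ Pr) :
    blockMarkovAmplitude g_rs g_ds g_dr Ps Pr =
      (-(g_ds * g_dr * √Pr) + √((g_ds * g_dr * √Pr) ^ 2
        - g_rs ^ 2 * (g_ds ^ 2 * Ps + g_dr ^ 2 * Pr - g_rs ^ 2 * Ps))) / g_rs ^ 2 := by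
  rw [blockMarkovAmplitude, mul_pow, sq_sqrt hPr]
  ring_nf

theorem blockMarkovAmplitude_pos (hgrs : g_rs ≠ 0) (hPr : 0 ≤ Pr)
    (hR2 : g_rs ^ 2 * Ps > g_ds ^ 2 * Ps + g_dr ^ 2 * Pr) :
    0 < blockMarkovAmplitude g_rs g_ds g_dr Ps Pr := by
  rw [blockMarkovAmplitude_eq hPr]
  exact neg_add_sqrt_div_pos (by positivity) (by linarith)

theorem blockMarkovAmplitude_balance (hgrs : g_rs ≠ 0) (hPr : 0 ≤ Pr)
    (hR2 : g_rs ^ 2 * Ps > g_ds ^ 2 * Ps + g_dr ^ 2 * Pr) :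
    g_rs ^ 2 * (Ps - blockMarkovAmplitude g_rs g_ds g_dr Ps Pr ^ 2) =
      g_ds ^ 2 * Ps + g_dr ^ 2 * Pr
        + 2 * g_ds * g_dr * √Pr * blockMarkovAmplitude g_rs g_ds g_dr Ps Pr := by
  have hquad := quadratic_eq_zero_of_mul_eq_neg_add_sqrt (b := g_ds * g_dr * √Pr)
    (c := g_ds ^ 2 * Ps + g_dr ^ 2 * Pr - g_rs ^ 2 * Ps)
    (x := blockMarkovAmplitude g_rs g_ds g_dr Ps Pr) (pow_ne_zero 2 hgrs)
    (by nlinarith [sq_nonneg (g_ds * g_dr * √Pr)])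
    (by rw [blockMarkovAmplitude_eq hPr]; field_simp)
  linear_combination -hquad

theorem J2_le_of_isAlloc {αs βs ks βr x : ℝ} (hg : 0 ≤ g_ds * g_dr)
    (halloc : IsAlloc Ps Pr αs βs ks βr) (hx : 0 ≤ x) (hαx : αs ≤ x ^ 2) :
    J2 g_ds g_dr αs βs ks βr ≤
      logb 2 (1 + g_ds ^ 2 * Ps + g_dr ^ 2 * Pr + 2 * g_ds * g_dr * √Pr * x) := by
  obtain ⟨hαs, hβs, hks, hβr, hPs, hPr⟩ := halloc
  have hcoh : g_ds * g_dr * (√ks * αs) ≤ g_ds * g_dr * (√Pr * x) :=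
    mul_le_mul_of_nonneg_left
      (sqrt_mul_le_sqrt_mul_of_mul_le hks hαs hx (by linarith) hαx) hg
  refine logb_le_logb_of_le one_lt_two ?_ ?_
  · have : 0 ≤ g_ds * g_dr * (√ks * αs) := by positivity
    have : 0 ≤ g_ds ^ 2 * (αs + βs) + g_dr ^ 2 * (ks * αs + βr) := by positivity
    linarith
  · have : g_ds ^ 2 * (αs + βs) ≤ g_ds ^ 2 * Ps := by gcongr
    have : g_dr ^ 2 * (ks * αs + βr) ≤ g_dr ^ 2 * Pr := by gcongr
    linarith

theorem J2_blockMarkov {x : ℝ} (hx : 0 < x) :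
    J2 g_ds g_dr (x ^ 2) (Ps - x ^ 2) (Pr / x ^ 2) 0 =
      logb 2 (1 + g_ds ^ 2 * Ps + g_dr ^ 2 * Pr + 2 * g_ds * g_dr * √Pr * x) := by
  rw [J2, sqrt_div' Pr (sq_nonneg x), sqrt_sq hx.le]
  field_simp
  ring_nf

theorem min_J1_J2_le_of_balance {αs βs ks βr x : ℝ} (hg : 0 ≤ g_ds * g_dr) (hx : 0 ≤ x)
    (hbal : g_rs ^ 2 * (Ps - x ^ 2) =
      g_ds ^ 2 * Ps + g_dr ^ 2 * Pr + 2 * g_ds * g_dr * √Pr * x)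
    (halloc : IsAlloc Ps Pr αs βs ks βr) :
    min (J1 g_rs βs) (J2 g_ds g_dr αs βs ks βr) ≤ logb 2 (1 + g_rs ^ 2 * (Ps - x ^ 2)) := by
  by_cases hβs : βs ≤ Ps - x ^ 2
  · exact (min_le_left _ _).trans (J1_le_logb halloc.2.1 hβs)
  · have hαx : αs ≤ x ^ 2 := by linarith [halloc.2.2.2.2.1]
    rw [hbal, ← add_assoc, ← add_assoc]
    exact (min_le_right _ _).trans (J2_le_of_isAlloc hg halloc hx hαx)

theorem isAlloc_blockMarkov {x : ℝ} (hx : 0 < x) (hxPs : x ^ 2 ≤ Ps) (hPr : 0 ≤ Pr) :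
    IsAlloc Ps Pr (x ^ 2) (Ps - x ^ 2) (Pr / x ^ 2) 0 := by
  refine ⟨by positivity, by linarith, by positivity, le_rfl, by linarith, ?_⟩
  rw [div_mul_cancel₀ Pr (by positivity), add_zero]

end BlockMarkov

/-- in regime R2 (`g_rs² P_s > g_ds² P_s + g_dr² P_r`), every power
allocation has composite decode-forward rate at most `log₂(1 + g_rs² (P_s - ξ))`, and
this rate is attained by the block Markov allocation `(ξ, P_s - ξ, P_r/ξ, 0)` (full
relay power, no independent-coding component). -/
theorem regime_R2_block_markov_optimal (g_rs g_ds g_dr Ps Pr : ℝ)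
    (hgrs : 0 < g_rs) (hgds : 0 < g_ds) (hgdr : 0 < g_dr)
    (hPs : 0 < Ps) (hPr : 0 < Pr)
    (hR2 : g_rs ^ 2 * Ps > g_ds ^ 2 * Ps + g_dr ^ 2 * Pr)
    (ξ : ℝ)
    (hξ : ξ = ((-(g_ds * g_dr * Real.sqrt Pr)
      + Real.sqrt (g_ds ^ 2 * g_dr ^ 2 * Pr
        - g_rs ^ 2 * (g_dr ^ 2 * Pr + g_ds ^ 2 * Ps - g_rs ^ 2 * Ps))) / g_rs ^ 2) ^ 2) :
    (∀ αs βs ks βr : ℝ, IsAlloc Ps Pr αs βs ks βr →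
      min (J1 g_rs βs) (J2 g_ds g_dr αs βs ks βr) ≤
        Real.logb 2 (1 + g_rs ^ 2 * (Ps - ξ))) ∧
    IsAlloc Ps Pr ξ (Ps - ξ) (Pr / ξ) 0 ∧
    min (J1 g_rs (Ps - ξ)) (J2 g_ds g_dr ξ (Ps - ξ) (Pr / ξ) 0) =
      Real.logb 2 (1 + g_rs ^ 2 * (Ps - ξ)) := by
  change ξ = blockMarkovAmplitude g_rs g_ds g_dr Ps Pr ^ 2 at hξ
  set x := blockMarkovAmplitude g_rs g_ds g_dr Ps Pr
  subst hξ
  have hx : 0 < x := blockMarkovAmplitude_pos hgrs.ne' hPr.le hR2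
  have hbal := blockMarkovAmplitude_balance hgrs.ne' hPr.le hR2
  have hg : 0 ≤ g_ds * g_dr := by positivity
  have hxPs : x ^ 2 ≤ Ps := by
    have : 0 ≤ g_rs ^ 2 * (Ps - x ^ 2) := hbal ▸ by positivity
    exact sub_nonneg.mp (nonneg_of_mul_nonneg_right this (by positivity))
  refine ⟨fun _ _ _ _ halloc => min_J1_J2_le_of_balance hg hx.le hbal halloc,
    isAlloc_blockMarkov hx hxPs hPr.le, ?_⟩
  have hJ2 : J2 g_ds g_dr (x ^ 2) (Ps - x ^ 2) (Pr / x ^ 2) 0 = J1 g_rs (Ps - x ^ 2) := by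
    rw [J2_blockMarkov hx, J1, hbal, ← add_assoc, ← add_assoc]
  rw [hJ2, min_self, J1]
end

section
/- Let X and Y be independent random variables, exponentially distributed with rates λ_rs > 0 and λ_ds > 0 respectively. For a target rate R > 0 and source power P_s > 0, set β1² = (2^R − 1)/P_s. Then the direct-transmission outage probability satisfies Pr(Y < β1² and X ≤ Y) = 1 − e^{−λ_ds·β1²} − (λ_ds/(λ_rs + λ_ds))·(1 − e^{−(λ_rs + λ_ds)·β1²}). -/
open MeasureTheory ProbabilityTheory Real Set

/-!
Integrating first over `X` and then over `Y`, independence gives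
`P(X ≤ Y < b) = ∫₀ᵇ F_X(y) f_Y(y) dy` with `F_X(y) = 1 - e^{-λ_rs y}` and
`f_Y(y) = λ_ds e^{-λ_ds y}`; the integrand has the elementary antiderivative
`-e^{-λ_ds y} + λ_ds/(λ_rs + λ_ds) · e^{-(λ_rs + λ_ds) y}`.
-/

lemma ProbabilityTheory.IndepFun.measure_lt_and_le_eq_setLIntegral_Iio {Ω : Type*}
    [MeasurableSpace Ω] {μ : Measure Ω} [IsFiniteMeasure μ] {X Y : Ω → ℝ}
    (hX : Measurable X) (hY : Measurable Y) (hXY : IndepFun X Y μ) (b : ℝ) :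
    μ {ω | Y ω < b ∧ X ω ≤ Y ω} = ∫⁻ y in Iio b, μ.map X (Iic y) ∂μ.map Y := by
  have hS : MeasurableSet {p : ℝ × ℝ | p.2 < b ∧ p.1 ≤ p.2} :=
    (measurableSet_lt measurable_snd measurable_const).inter
      (measurableSet_le measurable_fst measurable_snd)
  calc μ {ω | Y ω < b ∧ X ω ≤ Y ω}
      = μ.map (fun ω ↦ (X ω, Y ω)) {p : ℝ × ℝ | p.2 < b ∧ p.1 ≤ p.2} := by
        rw [Measure.map_apply (hX.prodMk hY) hS]; rfl
    _ = ((μ.map X).prod (μ.map Y)) {p : ℝ × ℝ | p.2 < b ∧ p.1 ≤ p.2} := by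
        rw [(indepFun_iff_map_prod_eq_prod_map_map hX.aemeasurable hY.aemeasurable).1 hXY]
    _ = ∫⁻ y in Iio b, μ.map X (Iic y) ∂μ.map Y := by
        rw [Measure.prod_apply_symm hS, ← lintegral_indicator measurableSet_Iio]
        congr with y
        by_cases hy : y < b <;> simp [hy, Iic_def]

lemma expMeasure_Iic {r : ℝ} (hr : 0 < r) (y : ℝ) :
    expMeasure r (Iic y) = ENNReal.ofReal (1 - exp (-(r * y))) := by
  rw [expMeasure, gammaMeasure, withDensity_apply _ measurableSet_Iic]
  refine (lintegral_exponentialPDF_eq_antiDeriv hr y).trans ?_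
  split_ifs with hy
  · rfl
  · -- for `y < 0` the right-hand side is the positive part of a negative number
    rw [ENNReal.ofReal_zero, eq_comm, ENNReal.ofReal_eq_zero, sub_nonpos, one_le_exp_iff]
    nlinarith

lemma setLIntegral_Iio_expMeasure {r b : ℝ} (hr : 0 < r) (hb : 0 ≤ b) {f : ℝ → ℝ}
    (hf : Continuous f) (hf₀ : ∀ y ∈ Ioo 0 b, 0 ≤ f y) :
    ∫⁻ y in Iio b, ENNReal.ofReal (f y) ∂expMeasure r =
      ENNReal.ofReal (∫ y in 0..b, f y * (r * exp (-(r * y)))) := by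
  have hIic : expMeasure r (Iic 0) = 0 := by
    rw [expMeasure_Iic hr, mul_zero, neg_zero, exp_zero, sub_self, ENNReal.ofReal_zero]
  have hnull : Iio b =ᵐ[expMeasure r] Ioo 0 b := by
    refine ae_eq_set.2 ⟨measure_mono_null (fun y hy ↦ ?_) hIic, ?_⟩
    · exact not_lt.1 fun h ↦ hy.2 ⟨h, hy.1⟩
    · rw [sdiff_eq_empty.2 Ioo_subset_Iio_self, measure_empty]
  have hcont : Continuous fun y ↦ f y * (r * exp (-(r * y))) := by fun_prop
  rw [setLIntegral_congr hnull, intervalIntegral.integral_of_le hb, integral_Ioc_eq_integral_Ioo,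
    ofReal_integral_eq_lintegral_ofReal (hcont.integrableOn_Icc.mono_set Ioo_subset_Icc_self)
      ((ae_restrict_iff' measurableSet_Ioo).2 (ae_of_all _ fun y hy ↦
        mul_nonneg (hf₀ y hy) (by positivity))),
    show expMeasure r = volume.withDensity (exponentialPDF r) from rfl,
    setLIntegral_withDensity_eq_setLIntegral_mul _
      (show Measurable (exponentialPDF r) from (measurable_exponentialPDFReal r).ennreal_ofReal)
      hf.measurable.ennreal_ofReal measurableSet_Ioo]
  refine setLIntegral_congr_fun measurableSet_Ioo fun y hy ↦ ?_
  rw [Pi.mul_apply, exponentialPDF_of_nonneg hy.1.le, mul_comm,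
    ← ENNReal.ofReal_mul (hf₀ y hy)]

lemma integral_one_sub_exp_mul_exp {a c : ℝ} (hac : a + c ≠ 0) (b : ℝ) :
    ∫ y in 0..b, (1 - exp (-(a * y))) * (c * exp (-(c * y))) =
      1 - exp (-(c * b)) - c / (a + c) * (1 - exp (-((a + c) * b))) := by
  have hderiv (y : ℝ) :
      HasDerivAt (fun y ↦ -exp (-(c * y)) + c / (a + c) * exp (-((a + c) * y)))
        ((1 - exp (-(a * y))) * (c * exp (-(c * y)))) y := by
    have h := ((hasDerivAt_neg_exp_mul_exp (r := c) (x := y))).add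
      ((hasDerivAt_neg_exp_mul_exp (r := a + c) (x := y)).const_mul (-(c / (a + c))))
    have hF : (fun y ↦ -exp (-(c * y)) + c / (a + c) * exp (-((a + c) * y))) =
        (fun y ↦ -exp (-(c * y))) + fun y ↦ -(c / (a + c)) * -exp (-((a + c) * y)) := by
      ext; simp only [Pi.add_apply]; ring
    have hexp : exp (-((a + c) * y)) = exp (-(a * y)) * exp (-(c * y)) := by
      rw [← exp_add]; ring_nf
    rw [hF]
    refine h.congr_deriv ?_
    rw [hexp]; field_simp; ring
  rw [intervalIntegral.integral_eq_sub_of_hasDerivAt (fun y _ ↦ hderiv y)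
    (by apply Continuous.intervalIntegrable; fun_prop)]
  simp only [mul_zero, neg_zero, exp_zero]
  ring

/-- direct-transmission outage probability in regime R0. For independent
`X ~ exp(λ_rs)`, `Y ~ exp(λ_ds)`, target rate `R > 0`, source power `P_s > 0` and
`β1² = (2^R - 1)/P_s`,
`Pr(Y < β1² ∧ X ≤ Y) = 1 - e^{-λ_ds β1²} - (λ_ds/(λ_rs+λ_ds))(1 - e^{-(λ_rs+λ_ds) β1²})`. -/
theorem direct_transmission_outage {Ω : Type*} [MeasurableSpace Ω]
    (μ : Measure Ω) [IsProbabilityMeasure μ]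
    (X Y : Ω → ℝ) (hX : Measurable X) (hY : Measurable Y)
    (lrs lds : ℝ) (hlrs : 0 < lrs) (hlds : 0 < lds)
    (hindep : IndepFun X Y μ)
    (hXlaw : μ.map X = expMeasure lrs)
    (hYlaw : μ.map Y = expMeasure lds)
    (R Ps : ℝ) (hR : 0 < R) (hPs : 0 < Ps)
    (b1sq : ℝ) (hb1sq : b1sq = ((2 : ℝ) ^ R - 1) / Ps) :
    μ {ω | Y ω < b1sq ∧ X ω ≤ Y ω} =
      ENNReal.ofReal (1 - Real.exp (-(lds * b1sq))
        - lds / (lrs + lds) * (1 - Real.exp (-((lrs + lds) * b1sq)))) := by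
  have hb : 0 ≤ b1sq := hb1sq ▸ div_nonneg (sub_nonneg.2 (one_le_rpow one_le_two hR.le)) hPs.le
  have hcdf_nonneg (y : ℝ) (hy : y ∈ Ioo 0 b1sq) : 0 ≤ 1 - exp (-(lrs * y)) := by
    rw [sub_nonneg, exp_le_one_iff, neg_nonpos]
    exact mul_nonneg hlrs.le hy.1.le
  rw [hindep.measure_lt_and_le_eq_setLIntegral_Iio hX hY, hXlaw, hYlaw]
  simp_rw [expMeasure_Iic hlrs]
  rw [setLIntegral_Iio_expMeasure hlds hb (by fun_prop) hcdf_nonneg,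
    integral_one_sub_exp_mul_exp (by positivity)]
end

section
/- Let X, Y, W be independent random variables, exponentially distributed with rates λ_rs > 0, λ_ds > 0, λ̃_dr > 0 respectively. Let 0 ≤ α_s < P_s, β_s = P_s − α_s, and R > 0; set β1 = √((2^R − 1)/P_s), η1 = √((2^R − 1)/β_s), and for 0 ≤ g ≤ β1 define ζ1(g) = (−g·√α_s + √(g²·(α_s − P_s) + 2^R − 1))/√P_s. Then the destination outage probability satisfies Pr(√Y < β1, √W < ζ1(√Y), √X > η1) = e^{−λ_rs·η1²}·(1 − e^{−λ_ds·β1²}) − e^{−λ_rs·η1²}·∫₀^{β1} 2·λ_ds·g·e^{−(λ_ds·g² + λ̃_dr·ζ1(g)²)} dg. -/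
/-!
Since `η1 ≥ 0`, the relay event `η1 < √X` is `X > η1²`, which by independence splits off with
probability `e^{-λ_rs η1²}`. On `0 ≤ g < β1` we have `g² P_s < 2^R - 1`, so the square root in
`ζ1 g` dominates `g √α_s` and `ζ1 g ≥ 0`; hence for `√y < β1` the conditional probability of
`√W < ζ1 √y` is `1 - e^{-λ̃_dr ζ1(√y)²}`. Integrating this against the exponential density of `Y`
over `y < β1²` and substituting `y = g²` gives the formula.
-/

open MeasureTheory ProbabilityTheory Set Real

namespace ProbabilityTheory

variable {r : ℝ}

lemma expMeasure_Iic (hr : 0 < r) {t : ℝ} (ht : 0 ≤ t) :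
    expMeasure r (Iic t) = ENNReal.ofReal (1 - exp (-(r * t))) := by
  have := isProbabilityMeasure_expMeasure hr
  rw [← ofReal_cdf, cdf_expMeasure_eq hr, if_pos ht]

lemma expMeasure_Iio (hr : 0 < r) {t : ℝ} (ht : 0 ≤ t) :
    expMeasure r (Iio t) = ENNReal.ofReal (1 - exp (-(r * t))) := by
  have hac : expMeasure r ≪ volume := withDensity_absolutelyContinuous _ _
  rw [measure_congr (hac.ae_eq Iio_ae_eq_Iic), expMeasure_Iic hr ht]

lemma expMeasure_Ioi (hr : 0 < r) {t : ℝ} (ht : 0 ≤ t) :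
    expMeasure r (Ioi t) = ENNReal.ofReal (exp (-(r * t))) := by
  have := isProbabilityMeasure_expMeasure hr
  have hcdf : 0 ≤ 1 - exp (-(r * t)) := sub_nonneg.2 (exp_le_one_iff.2 (by nlinarith))
  rw [← compl_Iic, prob_compl_eq_one_sub measurableSet_Iic, expMeasure_Iic hr ht,
    ← ENNReal.ofReal_one, ← ENNReal.ofReal_sub _ hcdf, sub_sub_cancel]

lemma expMeasure_sqrt_lt (hr : 0 < r) {z : ℝ} (hz : 0 ≤ z) :
    expMeasure r {w | √w < z} = ENNReal.ofReal (1 - exp (-(r * z ^ 2))) := by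
  rcases hz.eq_or_lt with rfl | hz
  · rw [show {w : ℝ | √w < 0} = ∅ from eq_empty_of_forall_notMem fun w => (sqrt_nonneg w).not_gt]
    simp
  · simp_rw [sqrt_lt' hz]
    exact expMeasure_Iio hr (sq_nonneg z)

lemma expMeasure_lt_sqrt (hr : 0 < r) {t : ℝ} (ht : 0 ≤ t) :
    expMeasure r {x | t < √x} = ENNReal.ofReal (exp (-(r * t ^ 2))) := by
  simp_rw [lt_sqrt ht]
  exact expMeasure_Ioi hr (sq_nonneg t)

lemma measurable_exponentialPDF (r : ℝ) : Measurable (exponentialPDF r) :=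
  (measurable_exponentialPDFReal r).ennreal_ofReal

lemma setLIntegral_Iio_expMeasure (hr : 0 < r) {f : ℝ → ℝ} (hf : Continuous f)
    (hf0 : ∀ y, 0 ≤ f y) {t : ℝ} (ht : 0 < t) :
    ∫⁻ y in Iio t, ENNReal.ofReal (f y) ∂expMeasure r =
      ENNReal.ofReal (∫ y in 0..t, r * exp (-(r * y)) * f y) := by
  have hnull : (expMeasure r).restrict (Iic 0) = 0 := by
    rw [Measure.restrict_eq_zero, expMeasure_Iic hr le_rfl, mul_zero, neg_zero, exp_zero, sub_self,
      ENNReal.ofReal_zero]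
  rw [← Iic_union_Ioo_eq_Iio ht, lintegral_union measurableSet_Ioo
    (Iic_disjoint_Ioi le_rfl |>.mono_right Ioo_subset_Ioi_self), hnull, lintegral_zero_measure,
    zero_add, show expMeasure r = volume.withDensity (exponentialPDF r) from rfl,
    restrict_withDensity measurableSet_Ioo, lintegral_withDensity_eq_lintegral_mul _
    (measurable_exponentialPDF r) hf.measurable.ennreal_ofReal]
  have hdensity : ∀ y ∈ Ioo 0 t, (exponentialPDF r * fun y => ENNReal.ofReal (f y)) y =
      ENNReal.ofReal (r * exp (-(r * y)) * f y) := fun y hy => by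
    rw [Pi.mul_apply, exponentialPDF_of_nonneg hy.1.le, ← ENNReal.ofReal_mul (by positivity)]
  rw [setLIntegral_congr_fun measurableSet_Ioo hdensity, ← ofReal_integral_eq_lintegral_ofReal,
    intervalIntegral.integral_of_le ht.le, integral_Ioc_eq_integral_Ioo]
  · exact (by fun_prop : Continuous _).integrableOn_Icc.mono_set Ioo_subset_Icc_self
  · exact ae_of_all _ fun y => mul_nonneg (by positivity) (hf0 y)

end ProbabilityTheory

lemma intervalIntegral.integral_comp_sq {f : ℝ → ℝ} (hf : Continuous f) (b : ℝ) :
    ∫ y in 0..b ^ 2, f y = ∫ g in 0..b, 2 * g * f (g ^ 2) := by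
  have := intervalIntegral.integral_comp_mul_deriv (a := 0) (b := b) (f := fun g => g ^ 2)
    (f' := fun g => 2 * g) (fun x _ => by simpa using hasDerivAt_pow 2 x) (by fun_prop) hf
  rw [zero_pow two_ne_zero] at this
  rw [← this]
  congr 1 with g
  simp only [Function.comp_apply]
  ring

lemma integral_two_mul_mul_exp_neg_mul_sq {a : ℝ} (b : ℝ) :
    ∫ g in 0..b, 2 * a * g * exp (-(a * g ^ 2)) = 1 - exp (-(a * b ^ 2)) := by
  rw [intervalIntegral.integral_eq_sub_of_hasDerivAt (f := fun g => -exp (-(a * g ^ 2)))]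
  · rw [zero_pow two_ne_zero, mul_zero, neg_zero, exp_zero]
    ring
  · intro x _
    have h : HasDerivAt (fun g => -(a * g ^ 2)) (-(a * (2 * x))) x :=
      ((hasDerivAt_pow 2 x).const_mul a).neg.congr_deriv (by norm_num)
    convert h.exp.neg using 1
    · rfl
    · ring
  · exact (by fun_prop : Continuous _).intervalIntegrable _ _

lemma sq_mul_lt_of_lt_sqrt_div {g c P : ℝ} (hg : 0 ≤ g) (hP : 0 < P) (h : g < √(c / P)) :
    g ^ 2 * P < c :=
  (lt_div_iff₀ hP).1 ((lt_sqrt hg).1 h)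

lemma mul_sqrt_le_sqrt_sq_mul_sub_add_sub {α P s g : ℝ} (hα : 0 ≤ α) (hg : 0 ≤ g)
    (hgs : g ^ 2 * P ≤ s - 1) :
    g * √α ≤ √(g ^ 2 * (α - P) + s - 1) := by
  rw [← sqrt_sq (by positivity : 0 ≤ g * √α), mul_pow, sq_sqrt hα]
  exact sqrt_le_sqrt (by linarith)

lemma exists_continuous_eqOn_Icc {β : Type*} [TopologicalSpace β] {a b : ℝ} (hab : a ≤ b)
    {f : ℝ → β} (hf : ContinuousOn f (Icc a b)) : ∃ g : ℝ → β, Continuous g ∧ EqOn f g (Icc a b) :=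
  ⟨IccExtend hab ((Icc a b).domRestrict f),
    continuous_IccExtend_iff.2 (continuousOn_iff_continuous_domRestrict.1 hf),
    fun _ hx => (IccExtend_of_mem hab ((Icc a b).domRestrict f) hx).symm⟩

def outageRegion (β : ℝ) (ζ : ℝ → ℝ) : Set (ℝ × ℝ) := {p | √p.1 < β ∧ √p.2 < ζ √p.1}

lemma outageRegion_congr {β : ℝ} {ζ ζ' : ℝ → ℝ} (h : EqOn ζ ζ' (Ico 0 β)) :
    outageRegion β ζ = outageRegion β ζ' :=
  ext fun _ => and_congr_right fun hp => by rw [h ⟨sqrt_nonneg _, hp⟩]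

lemma measurableSet_outageRegion {β : ℝ} (hβ : 0 ≤ β) {ζ : ℝ → ℝ}
    (hζ : ContinuousOn ζ (Icc 0 β)) : MeasurableSet (outageRegion β ζ) := by
  obtain ⟨ζ', hζ', hζζ'⟩ := exists_continuous_eqOn_Icc hβ hζ
  rw [outageRegion_congr (hζζ'.mono Ico_subset_Icc_self)]
  exact ((isOpen_lt (f := fun p : ℝ × ℝ => √p.1) (by fun_prop) continuous_const).inter
    (isOpen_lt (f := fun p : ℝ × ℝ => √p.2) (by fun_prop) (by fun_prop))).measurableSet

namespace ProbabilityTheory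

lemma prod_expMeasure_outageRegion_of_continuous {a b β : ℝ} (ha : 0 < a) (hb : 0 < b)
    (hβ : 0 < β) {ζ : ℝ → ℝ} (hζ : Continuous ζ) (hζ0 : ∀ g ∈ Ico 0 β, 0 ≤ ζ g) :
    (expMeasure a).prod (expMeasure b) (outageRegion β ζ) =
      ENNReal.ofReal (1 - exp (-(a * β ^ 2))
        - ∫ g in 0..β, 2 * a * g * exp (-(a * g ^ 2 + b * ζ g ^ 2))) := by
  set F : ℝ → ℝ := fun y => 1 - exp (-(b * ζ √y ^ 2))
  have hF0 : ∀ y, 0 ≤ F y := fun y =>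
    sub_nonneg.2 (exp_le_one_iff.2 (neg_nonpos.2 (by positivity)))
  have hslice : ∀ y, expMeasure b (Prod.mk y ⁻¹' outageRegion β ζ) =
      (Iio (β ^ 2)).indicator (fun y => ENNReal.ofReal (F y)) y := by
    intro y
    by_cases hy : y < β ^ 2
    · have hyβ : √y < β := (sqrt_lt' hβ).2 hy
      simp only [outageRegion, preimage_ofPred_eq, hyβ, true_and,
        indicator_of_mem (mem_Iio.2 hy)]
      exact expMeasure_sqrt_lt hb (hζ0 _ ⟨sqrt_nonneg y, hyβ⟩)
    · have hyβ : ¬ √y < β := fun h => hy ((sqrt_lt' hβ).1 h)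
      simp [outageRegion, hyβ, indicator_of_notMem (notMem_Iio.2 (not_lt.1 hy))]
  have hreal : ∫ y in 0..β ^ 2, a * exp (-(a * y)) * F y =
      1 - exp (-(a * β ^ 2)) - ∫ g in 0..β, 2 * a * g * exp (-(a * g ^ 2 + b * ζ g ^ 2)) := by
    rw [intervalIntegral.integral_comp_sq (by fun_prop), ← integral_two_mul_mul_exp_neg_mul_sq β,
      ← intervalIntegral.integral_sub]
    · refine intervalIntegral.integral_congr fun g hg => ?_
      rw [uIcc_of_le hβ.le] at hg
      simp only [F, sqrt_sq hg.1, neg_add, exp_add]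
      ring
    all_goals exact Continuous.intervalIntegrable (by fun_prop) _ _
  have := isProbabilityMeasure_expMeasure hb
  rw [Measure.prod_apply (measurableSet_outageRegion hβ.le hζ.continuousOn),
    lintegral_congr hslice, lintegral_indicator measurableSet_Iio,
    setLIntegral_Iio_expMeasure ha (by fun_prop) hF0 (by positivity), hreal]

lemma prod_expMeasure_outageRegion {a b β : ℝ} (ha : 0 < a) (hb : 0 < b) (hβ : 0 < β)
    {ζ : ℝ → ℝ} (hζ : ContinuousOn ζ (Icc 0 β)) (hζ0 : ∀ g ∈ Ico 0 β, 0 ≤ ζ g) :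
    (expMeasure a).prod (expMeasure b) (outageRegion β ζ) =
      ENNReal.ofReal (1 - exp (-(a * β ^ 2))
        - ∫ g in 0..β, 2 * a * g * exp (-(a * g ^ 2 + b * ζ g ^ 2))) := by
  obtain ⟨ζ', hζ', hζζ'⟩ := exists_continuous_eqOn_Icc hβ.le hζ
  have hint : ∫ g in 0..β, 2 * a * g * exp (-(a * g ^ 2 + b * ζ g ^ 2)) =
      ∫ g in 0..β, 2 * a * g * exp (-(a * g ^ 2 + b * ζ' g ^ 2)) :=
    intervalIntegral.integral_congr fun g hg => by rw [hζζ' (uIcc_of_le hβ.le ▸ hg)]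
  rw [outageRegion_congr (hζζ'.mono Ico_subset_Icc_self), hint]
  exact prod_expMeasure_outageRegion_of_continuous ha hb hβ hζ'
    fun g hg => hζζ' (Ico_subset_Icc_self hg) ▸ hζ0 g hg

lemma iIndepFun.measure_prodMk_preimage_inter_preimage {Ω E : Type*}
    [MeasurableSpace Ω] [MeasurableSpace E] {μ : Measure Ω} [IsProbabilityMeasure μ]
    {X Y W : Ω → E} (hX : Measurable X) (hY : Measurable Y) (hW : Measurable W)
    (hindep : iIndepFun ![X, Y, W] μ) {S : Set (E × E)} (hS : MeasurableSet S) {T : Set E}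
    (hT : MeasurableSet T) :
    μ ((fun ω => (Y ω, W ω)) ⁻¹' S ∩ X ⁻¹' T) = (μ.map Y).prod (μ.map W) S * μ.map X T := by
  have hYW_X : IndepFun (fun ω => (Y ω, W ω)) X μ := by
    simpa using hindep.indepFun_prodMk (fun i => by fin_cases i <;> assumption) 1 2 0
      (by decide) (by decide)
  have hYW : IndepFun Y W μ := by simpa using hindep.indepFun (show (1 : Fin 3) ≠ 2 by decide)
  rw [hYW_X.measure_inter_preimage_eq_mul S T hS hT, Measure.map_apply hX hT,
    ← (indepFun_iff_map_prod_eq_prod_map_map hY.aemeasurable hW.aemeasurable).1 hYW,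
    Measure.map_apply (hY.prodMk hW) hS]

end ProbabilityTheory

theorem destination_outage_general {Ω : Type*} [MeasurableSpace Ω]
    (μ : Measure Ω) [IsProbabilityMeasure μ]
    (X Y W : Ω → ℝ) (hX : Measurable X) (hY : Measurable Y) (hW : Measurable W)
    (lrs lds ldr : ℝ) (hlrs : 0 < lrs) (hlds : 0 < lds) (hldr : 0 < ldr)
    (hindep : iIndepFun ![X, Y, W] μ)
    (hXlaw : μ.map X = expMeasure lrs)
    (hYlaw : μ.map Y = expMeasure lds)
    (hWlaw : μ.map W = expMeasure ldr)
    (αs Ps R : ℝ) (hαs : 0 ≤ αs) (hαsP : αs < Ps) (hR : 0 < R)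
    (βs β1 η1 : ℝ) (ζ1 : ℝ → ℝ)
    (hβ1 : β1 = Real.sqrt (((2 : ℝ) ^ R - 1) / Ps))
    (hη1 : η1 = Real.sqrt (((2 : ℝ) ^ R - 1) / βs))
    (hζ1 : ∀ g : ℝ, 0 ≤ g → g ≤ β1 →
      ζ1 g = (-(g * Real.sqrt αs)
        + Real.sqrt (g ^ 2 * (αs - Ps) + (2 : ℝ) ^ R - 1)) / Real.sqrt Ps) :
    μ {ω | Real.sqrt (Y ω) < β1 ∧ Real.sqrt (W ω) < ζ1 (Real.sqrt (Y ω)) ∧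
        η1 < Real.sqrt (X ω)} =
      ENNReal.ofReal (Real.exp (-(lrs * η1 ^ 2)) * (1 - Real.exp (-(lds * β1 ^ 2)))
        - Real.exp (-(lrs * η1 ^ 2))
          * ∫ g in (0 : ℝ)..β1,
              2 * lds * g * Real.exp (-(lds * g ^ 2 + ldr * (ζ1 g) ^ 2))) := by
  have hPs : 0 < Ps := hαs.trans_lt hαsP
  have hβ1pos : 0 < β1 :=
    hβ1 ▸ sqrt_pos.2 (div_pos (sub_pos.2 (one_lt_rpow (by norm_num) hR)) hPs)
  have hζ1cont : ContinuousOn ζ1 (Icc 0 β1) :=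
    (by fun_prop : Continuous fun g : ℝ =>
      (-(g * √αs) + √(g ^ 2 * (αs - Ps) + (2 : ℝ) ^ R - 1)) / √Ps).continuousOn.congr
      fun g hg => hζ1 g hg.1 hg.2
  have hζ1nonneg : ∀ g ∈ Ico 0 β1, 0 ≤ ζ1 g := fun g hg => by
    have := mul_sqrt_le_sqrt_sq_mul_sub_add_sub hαs hg.1
      (sq_mul_lt_of_lt_sqrt_div hg.1 hPs (hβ1 ▸ hg.2)).le
    rw [hζ1 g hg.1 hg.2.le]
    exact div_nonneg (by linarith) (sqrt_nonneg _)
  have hevent : {ω | √(Y ω) < β1 ∧ √(W ω) < ζ1 √(Y ω) ∧ η1 < √(X ω)} =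
      (fun ω => (Y ω, W ω)) ⁻¹' outageRegion β1 ζ1 ∩ X ⁻¹' {x | η1 < √x} :=
    ext fun _ => and_assoc.symm
  rw [hevent, hindep.measure_prodMk_preimage_inter_preimage hX hY hW
      (measurableSet_outageRegion hβ1pos.le hζ1cont)
      (measurableSet_lt (by fun_prop) (by fun_prop)),
    hXlaw, hYlaw, hWlaw, prod_expMeasure_outageRegion hlds hldr hβ1pos hζ1cont hζ1nonneg,
    expMeasure_lt_sqrt hlrs (hη1 ▸ sqrt_nonneg _), ← ENNReal.ofReal_mul' (exp_nonneg _)]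
  congr 1
  ring

/-- destination outage probability in regime R2. For independent
`X ~ exp(λ_rs)`, `Y ~ exp(λ_ds)`, `W ~ exp(λ̃_dr)`, block Markov power split
`0 ≤ α_s < P_s`, `β_s = P_s - α_s`, target rate `R > 0`, and the thresholds
`β1, η1, ζ1` as defined,
`Pr(√Y < β1, √W < ζ1(√Y), √X > η1)
  = e^{-λ_rs η1²}(1 - e^{-λ_ds β1²})
    - e^{-λ_rs η1²} ∫₀^{β1} 2 λ_ds g e^{-(λ_ds g² + λ̃_dr ζ1(g)²)} dg`. -/
theorem destination_outage {Ω : Type*} [MeasurableSpace Ω]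
    (μ : Measure Ω) [IsProbabilityMeasure μ]
    (X Y W : Ω → ℝ) (hX : Measurable X) (hY : Measurable Y) (hW : Measurable W)
    (lrs lds ldr : ℝ) (hlrs : 0 < lrs) (hlds : 0 < lds) (hldr : 0 < ldr)
    (hindep : iIndepFun ![X, Y, W] μ)
    (hXlaw : μ.map X = expMeasure lrs)
    (hYlaw : μ.map Y = expMeasure lds)
    (hWlaw : μ.map W = expMeasure ldr)
    (αs Ps R : ℝ) (hαs : 0 ≤ αs) (hαsP : αs < Ps) (hR : 0 < R)
    (βs β1 η1 : ℝ) (ζ1 : ℝ → ℝ)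
    (hβs : βs = Ps - αs)
    (hβ1 : β1 = Real.sqrt (((2 : ℝ) ^ R - 1) / Ps))
    (hη1 : η1 = Real.sqrt (((2 : ℝ) ^ R - 1) / βs))
    (hζ1 : ∀ g : ℝ, 0 ≤ g → g ≤ β1 →
      ζ1 g = (-(g * Real.sqrt αs)
        + Real.sqrt (g ^ 2 * (αs - Ps) + (2 : ℝ) ^ R - 1)) / Real.sqrt Ps) :
    μ {ω | Real.sqrt (Y ω) < β1 ∧ Real.sqrt (W ω) < ζ1 (Real.sqrt (Y ω)) ∧
        η1 < Real.sqrt (X ω)} =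
      ENNReal.ofReal (Real.exp (-(lrs * η1 ^ 2)) * (1 - Real.exp (-(lds * β1 ^ 2)))
        - Real.exp (-(lrs * η1 ^ 2))
          * ∫ g in (0 : ℝ)..β1,
              2 * lds * g * Real.exp (-(lds * g ^ 2 + ldr * (ζ1 g) ^ 2))) :=
  destination_outage_general μ X Y W hX hY hW lrs lds ldr hlrs hlds hldr hindep hXlaw hYlaw hWlaw αs
    Ps R hαs hαsP hR βs β1 η1 ζ1 hβ1 hη1 hζ1
end

section
/- Fix λ_rs, λ_ds > 0 and a target rate R > 0, and for P > 0 define P_dt(P) = 1 − e^{−λ_ds·(2^R − 1)/P} − (λ_ds/(λ_rs + λ_ds))·(1 − e^{−(λ_rs + λ_ds)·(2^R − 1)/P}). Then lim_{P → ∞} P²·P_dt(P) = λ_ds·λ_rs·(2^R − 1)²/2; in particular the direct-transmission outage probability decays like 1/P² at high SNR, i.e. achieves diversity order 2. -/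
/-!
Both exponentials are expanded to second order: `P² (e^{-c/P} - 1 + c/P) → c²/2`. Writing
`a = λ_ds (2^R - 1)` and `b = (λ_rs + λ_ds)(2^R - 1)`, the outage probability is
`(a/b)(e^{-b/P} - 1 + b/P) - (e^{-a/P} - 1 + a/P)`, in which the first-order terms cancel, so
`P² P_dt(P) → (a/b)(b²/2) - a²/2 = a (b - a)/2`.
-/

open Filter Topology Real

theorem Real.abs_exp_sub_one_sub_id_sub_sq_div_two_le {x : ℝ} (hx : |x| ≤ 1) :
    |exp x - 1 - x - x ^ 2 / 2| ≤ |x| ^ 3 := by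
  have h := Real.exp_bound hx (n := 3) (by norm_num)
  norm_num [Finset.sum_range_succ, Nat.factorial] at h
  calc |exp x - 1 - x - x ^ 2 / 2| = |exp x - (1 + x + x ^ 2 / 2)| := by ring_nf
    _ ≤ |x| ^ 3 * (2 / 9) := h
    _ ≤ |x| ^ 3 := by nlinarith [pow_nonneg (abs_nonneg x) 3]

theorem tendsto_exp_sub_one_sub_id_div_sq :
    Tendsto (fun t : ℝ => (exp t - 1 - t) / t ^ 2) (𝓝[≠] 0) (𝓝 (1 / 2)) := by
  have hsmall : Tendsto (fun t : ℝ => (exp t - 1 - t) / t ^ 2 - 1 / 2) (𝓝[≠] 0) (𝓝 0) := by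
    refine squeeze_zero_norm' ?_
      ((continuous_abs.tendsto' 0 0 abs_zero).mono_left nhdsWithin_le_nhds)
    filter_upwards [self_mem_nhdsWithin, nhdsWithin_le_nhds (Icc_mem_nhds neg_one_lt_zero one_pos)]
      with t (ht : t ≠ 0) ht1
    have hsq : 0 < t ^ 2 := by positivity
    calc ‖(exp t - 1 - t) / t ^ 2 - 1 / 2‖ = |(exp t - 1 - t - t ^ 2 / 2) / t ^ 2| := by
          rw [Real.norm_eq_abs]; congr 1; field_simp
      _ = |exp t - 1 - t - t ^ 2 / 2| / t ^ 2 := by rw [abs_div, abs_of_pos hsq]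
      _ ≤ |t| ^ 3 / t ^ 2 := by
          gcongr; exact abs_exp_sub_one_sub_id_sub_sq_div_two_le (abs_le.2 ht1)
      _ = |t| := by rw [← sq_abs t]; field_simp
  simpa only [sub_add_cancel, zero_add] using hsmall.add_const (1 / 2 : ℝ)

theorem tendsto_sq_mul_exp_neg_div_sub_one_add_div (c : ℝ) :
    Tendsto (fun P : ℝ => P ^ 2 * (exp (-c / P) - 1 + c / P)) atTop (𝓝 (c ^ 2 / 2)) := by
  rcases eq_or_ne c 0 with rfl | hc
  · simp
  have hto : Tendsto (fun P : ℝ => -c / P) atTop (𝓝[≠] 0) :=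
    tendsto_nhdsWithin_iff.2 ⟨tendsto_const_nhds.div_atTop tendsto_id,
      (eventually_ne_atTop 0).mono fun P hP => div_ne_zero (neg_ne_zero.2 hc) hP⟩
  have hlim := (tendsto_exp_sub_one_sub_id_div_sq.comp hto).const_mul (c ^ 2)
  rw [mul_one_div] at hlim
  refine hlim.congr' ((eventually_ne_atTop 0).mono fun P hP => ?_)
  simp only [Function.comp_apply]
  field_simp
  ring

theorem tendsto_sq_mul_one_sub_exp_sub_div_mul_one_sub_exp (a : ℝ) {b : ℝ} (hb : b ≠ 0) :
    Tendsto (fun P : ℝ => P ^ 2 * (1 - exp (-a / P) - a / b * (1 - exp (-b / P))))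
      atTop (𝓝 (a * (b - a) / 2)) := by
  have hlim := ((tendsto_sq_mul_exp_neg_div_sub_one_add_div b).const_mul (a / b)).sub
    (tendsto_sq_mul_exp_neg_div_sub_one_add_div a)
  convert hlim using 1
  · funext P
    field_simp
    ring
  · field_simp

/-- the direct-transmission outage probability
`P_dt(P) = 1 - e^{-λ_ds (2^R - 1)/P} - (λ_ds/(λ_rs+λ_ds))(1 - e^{-(λ_rs+λ_ds)(2^R - 1)/P})`
satisfies `P² P_dt(P) → λ_ds λ_rs (2^R - 1)²/2` as `P → ∞`: diversity order 2. -/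
theorem direct_transmission_diversity_order_two (lrs lds R : ℝ)
    (hlrs : 0 < lrs) (hlds : 0 < lds) (hR : 0 < R) :
    Filter.Tendsto
      (fun P : ℝ => P ^ 2 *
        (1 - Real.exp (-(lds * ((2 : ℝ) ^ R - 1) / P))
          - lds / (lrs + lds) * (1 - Real.exp (-((lrs + lds) * ((2 : ℝ) ^ R - 1) / P)))))
      Filter.atTop
      (nhds (lds * lrs * ((2 : ℝ) ^ R - 1) ^ 2 / 2)) := by
  set K : ℝ := (2 : ℝ) ^ R - 1
  have hK : K ≠ 0 := (sub_pos.2 (one_lt_rpow one_lt_two hR)).ne'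
  have hb : (lrs + lds) * K ≠ 0 := mul_ne_zero (by positivity) hK
  have hlim := tendsto_sq_mul_one_sub_exp_sub_div_mul_one_sub_exp (lds * K) hb
  rw [mul_div_mul_right lds _ hK] at hlim
  simp only [neg_div] at hlim
  convert hlim using 2
  ring
end

section
/- Let X, Y, Z be independent random variables, exponentially distributed with rates λ_rs > 0, λ_ds > 0, λ_dr > 0 respectively, and let P_s, P_r > 0. Then the expected relay power savings with perfect CSI satisfies E[(P_r − ((X − Y)/Z)·P_s)·1{Y < X ≤ Y + (P_r/P_s)·Z}] = λ_ds·λ_dr·( P_s·(ln(λ_dr) − ln((P_r/P_s)·λ_rs + λ_dr)) + P_r·λ_rs/λ_dr )/(λ_rs·(λ_rs + λ_ds)), where ln is the natural logarithm. -/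
/-!
With `c = P_r / P_s` the savings are `P_s (c - (X - Y) / Z)` on `Y < X ≤ Y + c Z`; integrate out
`X`, then `Y`, then `Z`. For fixed `Y = y`, `Z = z` the integral over `X` is elementary and equals
`e^{-λ_rs y} (c - (1 - e^{-λ_rs c z}) / (λ_rs z))`. The factor `e^{-λ_rs y}` has mean
`λ_ds / (λ_ds + λ_rs)`, and the mean of `(1 - e^{-a Z}) / Z` is `λ_dr` times the Frullani integral
`∫₀^∞ (e^{-λ_dr z} - e^{-(λ_dr + a) z}) / z dz = log ((λ_dr + a) / λ_dr)`, which is where the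
logarithms come from.
-/

open MeasureTheory ProbabilityTheory Real Set Filter Topology

lemma ae_expMeasure_pos (r : ℝ) : ∀ᵐ x ∂expMeasure r, 0 < x := by
  rw [ae_iff]
  simp only [not_lt]
  change volume.withDensity (gammaPDF 1 r) (Iic 0) = 0
  rw [withDensity_apply _ measurableSet_Iic, setLIntegral_congr Iio_ae_eq_Iic.symm]
  exact lintegral_exponentialPDF_of_nonpos le_rfl

lemma integral_expMeasure {r : ℝ} (hr : 0 < r) (f : ℝ → ℝ) :
    ∫ x, f x ∂expMeasure r = ∫ x in Ioi 0, r * exp (-(r * x)) * f x := by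
  rw [expMeasure, gammaMeasure, integral_withDensity_eq_integral_toReal_smul (f := gammaPDF 1 r)
      (measurable_gammaPDFReal 1 r).ennreal_ofReal (ae_of_all _ fun _ => ENNReal.ofReal_lt_top),
    ← integral_Ici_eq_integral_Ioi, ← integral_indicator measurableSet_Ici]
  congr 1 with x
  change (exponentialPDF r x).toReal * f x = _
  by_cases hx : 0 ≤ x
  · rw [exponentialPDF_of_nonneg hx, ENNReal.toReal_ofReal (by positivity),
      indicator_of_mem (mem_Ici.2 hx)]
  · rw [exponentialPDF_of_neg (not_le.1 hx), indicator_of_notMem (mt mem_Ici.1 hx)]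
    simp

lemma integral_exp_neg_mul_expMeasure {r b : ℝ} (hr : 0 < r) (hrb : 0 < r + b) :
    ∫ x, exp (-(b * x)) ∂expMeasure r = r / (r + b) := by
  have hexp : ∀ x, r * exp (-(r * x)) * exp (-(b * x)) = r * exp (-(r + b) * x) := fun x => by
    rw [mul_assoc, ← exp_add]; ring_nf
  simp_rw [integral_expMeasure hr, hexp, integral_const_mul,
    integral_exp_mul_Ioi (neg_lt_zero.2 hrb)]
  field_simp
  simp

lemma one_sub_exp_neg_mul_div_mem_Icc {a z : ℝ} (ha : 0 ≤ a) (hz : 0 < z) :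
    (1 - exp (-(a * z))) / z ∈ Icc 0 a := by
  have hexp_le_one : exp (-(a * z)) ≤ 1 := exp_le_one_iff.2 (by nlinarith)
  refine ⟨div_nonneg (by linarith) hz.le, (div_le_iff₀ hz).2 ?_⟩
  linarith [add_one_le_exp (-(a * z))]

lemma integrableOn_inv_mul_exp_neg_sub_exp_neg {t a : ℝ} (ht : 0 < t) (ha : 0 ≤ a) :
    IntegrableOn (fun z => z⁻¹ * (exp (-(t * z)) - exp (-((t + a) * z)))) (Ioi 0) := by
  have hdom : IntegrableOn (fun z => a * exp (-t * z)) (Ioi 0) :=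
    (exp_neg_integrableOn_Ioi 0 ht).const_mul a
  refine hdom.mono' (by fun_prop) ((ae_restrict_iff' measurableSet_Ioi).2 (ae_of_all _ ?_))
  intro z (hz : 0 < z)
  have hfactor : z⁻¹ * (exp (-(t * z)) - exp (-((t + a) * z)))
      = exp (-(t * z)) * ((1 - exp (-(a * z))) / z) := by
    rw [show -((t + a) * z) = -(t * z) + -(a * z) by ring, exp_add]; field_simp
  obtain ⟨hnonneg, hle⟩ := one_sub_exp_neg_mul_div_mem_Icc ha hz
  rw [hfactor, norm_of_nonneg (mul_nonneg (exp_pos _).le hnonneg), neg_mul, mul_comm a (exp _)]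
  exact mul_le_mul_of_nonneg_left hle (exp_pos _).le

lemma integral_one_sub_exp_neg_mul_div_expMeasure {t a : ℝ} (ht : 0 < t) (ha : 0 ≤ a) :
    ∫ z, (1 - exp (-(a * z))) / z ∂expMeasure t = t * log ((t + a) / t) := by
  have hfactor : ∀ z, t * exp (-(t * z)) * ((1 - exp (-(a * z))) / z)
      = t * (z⁻¹ * (exp (-(t * z)) - exp (-((t + a) * z)))) := fun z => by
    rw [show -((t + a) * z) = -(t * z) + -(a * z) by ring, exp_add]; ring
  simp_rw [integral_expMeasure ht, hfactor, integral_const_mul]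
  have hlim_zero : Tendsto (fun x => exp (-x)) (𝓝[>] 0) (𝓝 1) := by
    simpa using (continuous_neg.rexp.tendsto 0).mono_left nhdsWithin_le_nhds
  have hfrullani := Frullani.integral_Ioi_eq (f := fun x => exp (-x))
    (continuous_neg.rexp.continuousOn.locallyIntegrableOn measurableSet_Ioi) ht
    (by positivity : 0 < t + a) hlim_zero tendsto_exp_neg_atTop_nhds_zero
    (integrableOn_inv_mul_exp_neg_sub_exp_neg ht ha)
  simp only [smul_eq_mul, sub_zero, mul_one] at hfrullani
  rw [hfrullani]

/-- Relay power savings `P_r - β_r` in units of `P_s`, where `c = P_r / P_s`, `z = g_dr²`,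
`y = g_ds²` and `x = g_rs²`. -/
noncomputable def normalizedSavings (c z y x : ℝ) : ℝ :=
  (Ioc y (y + c * z)).indicator (fun x => c - (x - y) / z) x

lemma measurable_normalizedSavings (c : ℝ) :
    Measurable fun q : ℝ × ℝ × ℝ => normalizedSavings c q.1 q.2.1 q.2.2 := by
  simp only [normalizedSavings, indicator_apply, mem_Ioc]
  refine Measurable.ite ?_ (by fun_prop) measurable_const
  exact (measurableSet_lt (f := fun q : ℝ × ℝ × ℝ => q.2.1) (by fun_prop) (by fun_prop)).inter
    (measurableSet_le (f := fun q : ℝ × ℝ × ℝ => q.2.2) (by fun_prop) (by fun_prop))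

lemma abs_normalizedSavings_le {c : ℝ} (hc : 0 ≤ c) (z y x : ℝ) :
    |normalizedSavings c z y x| ≤ c := by
  by_cases hx : x ∈ Ioc y (y + c * z)
  · have hz : 0 < z := pos_of_mul_pos_right (by linarith [hx.1, hx.2]) hc
    have hle : (x - y) / z ≤ c := (div_le_iff₀ hz).2 (by linarith [hx.2])
    have hnonneg : 0 ≤ (x - y) / z := div_nonneg (by linarith [hx.1]) hz.le
    rw [normalizedSavings, indicator_of_mem hx, abs_le]
    constructor <;> linarith
  · rw [normalizedSavings, indicator_of_notMem hx, abs_zero]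
    exact hc

lemma integrable_normalizedSavings {c : ℝ} (hc : 0 ≤ c) (μ : Measure (ℝ × ℝ × ℝ))
    [IsFiniteMeasure μ] : Integrable (fun q => normalizedSavings c q.1 q.2.1 q.2.2) μ :=
  .of_bound (measurable_normalizedSavings c).aestronglyMeasurable c
    (ae_of_all _ fun _ => abs_normalizedSavings_le hc _ _ _)

lemma integral_normalizedSavings_expMeasure {r c z y : ℝ} (hr : 0 < r) (hc : 0 ≤ c) (hz : 0 < z)
    (hy : 0 ≤ y) :
    ∫ x, normalizedSavings c z y x ∂expMeasure r
      = exp (-(r * y)) * (c - r⁻¹ * ((1 - exp (-(r * c * z))) / z)) := by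
  have hyc : y ≤ y + c * z := by nlinarith
  have hsub : Ioc y (y + c * z) ⊆ Ioi 0 := fun x hx => hy.trans_lt hx.1
  rw [integral_expMeasure hr]
  simp_rw [normalizedSavings, ← indicator_mul_right _ (fun x => r * exp (-(r * x)))]
  rw [setIntegral_indicator measurableSet_Ioc, inter_eq_self_of_subset_right hsub,
    ← intervalIntegral.integral_of_le hyc]
  have hderiv : ∀ x ∈ uIcc y (y + c * z),
      HasDerivAt (fun x => exp (-(r * x)) * ((x - y) / z - c + (r * z)⁻¹))
        (r * exp (-(r * x)) * (c - (x - y) / z)) x := by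
    intro x _
    have hlin : HasDerivAt (fun x => (x - y) / z - c + (r * z)⁻¹) z⁻¹ x := by
      simpa using (((hasDerivAt_id x).sub_const y).div_const z).sub_const c |>.add_const (r * z)⁻¹
    have hexp : HasDerivAt (fun x => exp (-(r * x))) (exp (-(r * x)) * -r) x := by
      simpa using ((hasDerivAt_id x).const_mul r).neg.exp
    refine (hexp.mul hlin).congr_deriv ?_
    field_simp
    ring
  rw [intervalIntegral.integral_eq_sub_of_hasDerivAt hderiv
    (Continuous.intervalIntegrable (by fun_prop) _ _)]
  rw [show -(r * (y + c * z)) = -(r * y) + -(r * c * z) by ring, exp_add]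
  field_simp
  ring

lemma integral_normalizedSavings_expMeasure_prod {r s t c : ℝ} (hr : 0 < r) (hs : 0 < s)
    (ht : 0 < t) (hc : 0 ≤ c) :
    ∫ q, normalizedSavings c q.1 q.2.1 q.2.2
        ∂(expMeasure t).prod ((expMeasure s).prod (expMeasure r))
      = s / (s + r) * (c - r⁻¹ * (t * log ((t + r * c) / t))) := by
  have := isProbabilityMeasure_expMeasure hr
  have := isProbabilityMeasure_expMeasure hs
  have := isProbabilityMeasure_expMeasure ht
  have hinner : ∀ z, 0 < z →
      ∫ q, normalizedSavings c z q.1 q.2 ∂(expMeasure s).prod (expMeasure r)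
        = s / (s + r) * (c - r⁻¹ * ((1 - exp (-(r * c * z))) / z)) := fun z hz => by
    have hint : Integrable (fun q : ℝ × ℝ => normalizedSavings c z q.1 q.2)
        ((expMeasure s).prod (expMeasure r)) :=
      .of_bound ((measurable_normalizedSavings c).comp measurable_prodMk_left).aestronglyMeasurable
        c (ae_of_all _ fun _ => abs_normalizedSavings_le hc _ _ _)
    rw [integral_prod _ hint, ← integral_exp_neg_mul_expMeasure hs (by positivity : 0 < s + r),
      ← integral_mul_const]
    refine integral_congr_ae ?_
    filter_upwards [ae_expMeasure_pos s] with y hy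
    exact integral_normalizedSavings_expMeasure hr hc hz hy.le
  have hbound : ∀ᵐ z ∂expMeasure t, ‖(1 - exp (-(r * c * z))) / z‖ ≤ r * c := by
    filter_upwards [ae_expMeasure_pos t] with z hz
    obtain ⟨hnonneg, hle⟩ := one_sub_exp_neg_mul_div_mem_Icc (by positivity : 0 ≤ r * c) hz
    rwa [norm_of_nonneg hnonneg]
  have hint : Integrable (fun z => (1 - exp (-(r * c * z))) / z) (expMeasure t) :=
    .of_bound (Measurable.aestronglyMeasurable (by fun_prop)) _ hbound
  rw [integral_prod _ (integrable_normalizedSavings hc _),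
    integral_congr_ae ((ae_expMeasure_pos t).mono hinner), integral_const_mul,
    integral_sub (integrable_const c) (hint.const_mul r⁻¹), integral_const_mul,
    integral_one_sub_exp_neg_mul_div_expMeasure ht (by positivity)]
  simp

lemma map_prodMk_eq_prod_map_of_iIndepFun {Ω β : Type*} [MeasurableSpace Ω] [MeasurableSpace β]
    {μ : Measure Ω} [IsProbabilityMeasure μ] {X Y Z : Ω → β}
    (hX : Measurable X) (hY : Measurable Y) (hZ : Measurable Z) (hindep : iIndepFun ![X, Y, Z] μ) :
    μ.map (fun ω => (Z ω, Y ω, X ω)) = (μ.map Z).prod ((μ.map Y).prod (μ.map X)) := by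
  have hmeas : ∀ i, Measurable (![X, Y, Z] i) := fun i => by fin_cases i <;> assumption
  have hYX : IndepFun Y X μ := hindep.indepFun (i := 1) (j := 0) (by decide)
  have hZYX : IndepFun Z (fun ω => (Y ω, X ω)) μ :=
    (hindep.indepFun_prodMk hmeas 1 0 2 (by decide) (by decide)).symm
  rw [hZYX.map_prod_eq_prod_map_map hZ.aemeasurable (hY.prodMk hX).aemeasurable,
    hYX.map_prod_eq_prod_map_map hY.aemeasurable hX.aemeasurable]

/-- expected relay power savings with perfect CSI. For independent
`X ~ exp(λ_rs)`, `Y ~ exp(λ_ds)`, `Z ~ exp(λ_dr)` and powers `P_s, P_r > 0`,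
`E[(P_r - ((X - Y)/Z) P_s) 1{Y < X ≤ Y + (P_r/P_s) Z}]
  = λ_ds λ_dr (P_s (ln λ_dr - ln((P_r/P_s) λ_rs + λ_dr)) + P_r λ_rs/λ_dr)
      / (λ_rs (λ_rs + λ_ds))`. -/
theorem expected_relay_power_savings_perfect_CSI {Ω : Type*} [MeasurableSpace Ω]
    (μ : Measure Ω) [IsProbabilityMeasure μ]
    (X Y Z : Ω → ℝ) (hX : Measurable X) (hY : Measurable Y) (hZ : Measurable Z)
    (lrs lds ldr : ℝ) (hlrs : 0 < lrs) (hlds : 0 < lds) (hldr : 0 < ldr)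
    (hindep : iIndepFun ![X, Y, Z] μ)
    (hXlaw : μ.map X = expMeasure lrs)
    (hYlaw : μ.map Y = expMeasure lds)
    (hZlaw : μ.map Z = expMeasure ldr)
    (Ps Pr : ℝ) (hPs : 0 < Ps) (hPr : 0 < Pr) :
    ∫ ω, Set.indicator {ω' | Y ω' < X ω' ∧ X ω' ≤ Y ω' + (Pr / Ps) * Z ω'}
        (fun ω' => Pr - ((X ω' - Y ω') / Z ω') * Ps) ω ∂μ =
      lds * ldr * (Ps * (Real.log ldr - Real.log ((Pr / Ps) * lrs + ldr))
        + Pr * lrs / ldr) / (lrs * (lrs + lds)) := by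
  set c := Pr / Ps
  have hPr_eq : Pr = c * Ps := (div_mul_cancel₀ Pr hPs.ne').symm
  have hsavings : ∀ ω, {ω' | Y ω' < X ω' ∧ X ω' ≤ Y ω' + c * Z ω'}.indicator
      (fun ω' => Pr - ((X ω' - Y ω') / Z ω') * Ps) ω
        = normalizedSavings c (Z ω) (Y ω) (X ω) * Ps := fun ω => by
    simp only [normalizedSavings, indicator_apply, mem_ofPred_eq, mem_Ioc]
    split_ifs <;> simp [hPr_eq, sub_mul]
  have hlaw := integral_map (μ := μ) (hZ.prodMk (hY.prodMk hX)).aemeasurable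
    (measurable_normalizedSavings c).aestronglyMeasurable
  dsimp only at hlaw
  rw [map_prodMk_eq_prod_map_of_iIndepFun hX hY hZ hindep, hXlaw, hYlaw, hZlaw,
    integral_normalizedSavings_expMeasure_prod hlrs hlds hldr (by positivity)] at hlaw
  simp_rw [hsavings, integral_mul_const, ← hlaw]
  rw [log_div (by positivity) hldr.ne', hPr_eq, add_comm ldr, mul_comm lrs]
  field_simp
  ring
end
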